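/- arXiv:2406.04260 — 4 statements merged into one kernel-verified Lean document; each statement's English description precedes it below -/
import Mathlib

section
/- Let D and D' be escape-ways in a graph G, and let K(D) be the oriented subgraph obtained from D by adding, for every directed edge uv ∈ E(D), all directed edges vw with w ∈ N_G(v) \ {u}. Then D ∪ D' is an escape-way if and only if for every vertex x, the out-neighbourhood of x in D' is contained in the set A_{K(D)}(x) of available neighbours of x with respect to K(D). -/
/-- An escape-way in `G`. -/
def IsEscapeWay {V : Type*} (G : SimpleGraph V) (D : V → V → Prop) : Prop :=
  (∀ u v, D u v → G.Adj u v) ∧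
  (∀ v u w, D u v → D w v → u = w) ∧
  (∀ x y, (∃ a, D a x) → (∃ b, D b y) → G.Adj x y → Xor' (D x y) (D y x))

/-- `K(D)`: add, for every edge `uv ∈ E(D)`, all edges `vw` with `w ∈ N_G(v) \ {u}`. -/
def KExt {V : Type*} (G : SimpleGraph V) (D : V → V → Prop) : V → V → Prop :=
  fun v w => D v w ∨ ∃ u, D u v ∧ G.Adj v w ∧ w ≠ u

/-- The available neighbourhood `A_B(v) = N_G(v) \ (V_in(B − v) ∪ N⁻_B(v))`. -/
def Avail {V : Type*} (G : SimpleGraph V) (B : V → V → Prop) (v : V) : Set V :=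
  {u | G.Adj v u ∧ ¬ (∃ z, z ≠ v ∧ B z u) ∧ ¬ B u v}

/-- For escape-ways `D`, `D'` in `G`, the union `D ∪ D'` is an escape-way if
and only if, for every vertex `x`, the out-neighbourhood of `x` in `D'` is contained in
`A_{K(D)}(x)`. -/
theorem stmt6 {V : Type*} (G : SimpleGraph V) (D D' : V → V → Prop)
    (hD : IsEscapeWay G D) (hD' : IsEscapeWay G D') :
    IsEscapeWay G (fun u v => D u v ∨ D' u v) ↔
      ∀ x y, D' x y → y ∈ Avail G (KExt G D) x := by
  obtain ⟨hD1, hD2, hD3⟩ := hD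
  obtain ⟨hD'1, hD'2, hD'3⟩ := hD'
  constructor
  · rintro ⟨hU1, hU2, hU3⟩ x y hxy
    refine ⟨hD'1 x y hxy, ?_, ?_⟩
    · rintro ⟨z, hz, hK⟩
      rcases hK with hDzy | ⟨u, hDuz, hadj, hyu⟩
      · exact hz (hU2 y z x (Or.inl hDzy) (Or.inr hxy))
      · rcases hU3 z y ⟨u, Or.inl hDuz⟩ ⟨x, Or.inr hxy⟩ hadj with ⟨hzy, _⟩ | ⟨hyz, _⟩
        · rcases hzy with h | h
          · exact hz (hU2 y z x (Or.inl h) (Or.inr hxy))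
          · exact hz (hD'2 y z x h hxy)
        · exact hyu (hU2 z y u hyz (Or.inl hDuz))
    · rintro (hDyx | ⟨u, hDuy, hadj, hxu⟩)
      · rcases hU3 x y ⟨y, Or.inl hDyx⟩ ⟨x, Or.inr hxy⟩ ((hD1 y x hDyx).symm) with
          ⟨_, h⟩ | ⟨_, h⟩
        · exact h (Or.inl hDyx)
        · exact h (Or.inr hxy)
      · exact hxu (hU2 y x u (Or.inr hxy) (Or.inl hDuy))
  · intro H
    refine ⟨?_, ?_, ?_⟩
    · rintro u v (h | h)
      exacts [hD1 u v h, hD'1 u v h]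
    · rintro v u w (hu | hu) (hw | hw)
      · exact hD2 v u w hu hw
      · by_contra hne
        exact (H w v hw).2.1 ⟨u, hne, Or.inl hu⟩
      · by_contra hne
        exact (H u v hu).2.1 ⟨w, fun h => hne h.symm, Or.inl hw⟩
      · exact hD'2 v u w hu hw
    · rintro x y ⟨a, ha⟩ ⟨b, hb⟩ hadj
      have hnot : ¬ ((D x y ∨ D' x y) ∧ (D y x ∨ D' y x)) := by
        rintro ⟨hxy | hxy, hyx | hyx⟩
        · rcases hD3 x y ⟨y, hyx⟩ ⟨x, hxy⟩ hadj with ⟨_, h⟩ | ⟨_, h⟩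
          exacts [h hyx, h hxy]
        · exact (H y x hyx).2.2 (Or.inl hxy)
        · exact (H x y hxy).2.2 (Or.inl hyx)
        · rcases hD'3 x y ⟨y, hyx⟩ ⟨x, hxy⟩ hadj with ⟨_, h⟩ | ⟨_, h⟩
          exacts [h hyx, h hxy]
      have hor : (D x y ∨ D' x y) ∨ (D y x ∨ D' y x) := by
        rcases ha with ha | ha <;> rcases hb with hb | hb
        · rcases hD3 x y ⟨a, ha⟩ ⟨b, hb⟩ hadj with ⟨h, _⟩ | ⟨h, _⟩
          exacts [Or.inl (Or.inl h), Or.inr (Or.inl h)]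
        · by_cases hya : y = a
          · exact Or.inr (Or.inl (hya ▸ ha))
          · by_cases hxb : x = b
            · exact Or.inl (Or.inr (hxb ▸ hb))
            · exact absurd ⟨x, hxb, Or.inr ⟨a, ha, hadj, hya⟩⟩ ((H b y hb).2.1)
        · by_cases hxb : x = b
          · exact Or.inl (Or.inl (hxb ▸ hb))
          · by_cases hya : y = a
            · exact Or.inr (Or.inr (hya ▸ ha))
            · exact absurd ⟨y, hya, Or.inr ⟨b, hb, hadj.symm, hxb⟩⟩ ((H a x ha).2.1)
        · rcases hD'3 x y ⟨a, ha⟩ ⟨b, hb⟩ hadj with ⟨h, _⟩ | ⟨h, _⟩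
          exacts [Or.inl (Or.inr h), Or.inr (Or.inr h)]
      rcases hor with h | h
      · exact Or.inl ⟨h, fun h' => hnot ⟨h, h'⟩⟩
      · exact Or.inr ⟨h, fun h' => hnot ⟨h', h⟩⟩
end

section
/- Let X be a finite vertex set in a graph G with G[X] connected, and let C(X) be the d-critical set of X for some d ≥ 3. If |C(X)| ≥ 2|X|, then G contains a subgraph H on at most (2d+2)|X| vertices with average degree at least 2 + (d−2)/(2d+2). -/
/-- `u` lies within distance at most 2 of the set `S` in the graph `G - v`
(members of `S` have distance 0). -/
def Near2 {V : Type*} (G : SimpleGraph V) (v : V) (S : Set V) (u : V) : Prop :=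
  u ∈ S ∨ (∃ x ∈ S, x ≠ v ∧ G.Adj u x) ∨
    (∃ x ∈ S, ∃ w, x ≠ v ∧ w ≠ v ∧ G.Adj u w ∧ G.Adj w x)

/-- The bootstrap percolation rule: `v` becomes critical for `S` if at least `d`
neighbours of `v` lie within distance at most 2 of `S` in `G - v`. -/
def CritRule {V : Type*} (G : SimpleGraph V) (d : ℕ) (S : Set V) (v : V) : Prop :=
  ∃ F : Finset V, d ≤ F.card ∧ ∀ u ∈ F, G.Adj v u ∧ Near2 G v S u

/-- The `d`-critical set of `X`: the terminal set of the bootstrap percolation process,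
i.e. the least superset of `X` closed under the rule. -/
def CritSet {V : Type*} (G : SimpleGraph V) (d : ℕ) (X : Set V) : Set V :=
  ⋂₀ {S : Set V | X ⊆ S ∧ ∀ v, CritRule G d S v → v ∈ S}

noncomputable section
namespace Stmt9

open Finset

open scoped Classical

variable {V : Type*}

/-- degree of `z` in the edge finset `E`. -/
def degE (E : Finset (Sym2 V)) (z : V) : ℕ := (E.filter (fun e => z ∈ e)).card

/-- all edges are genuine `G`-edges with endpoints in `W`. -/
def EdgesOK (G : SimpleGraph V) (W : Finset V) (E : Finset (Sym2 V)) : Prop :=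
  ∀ e ∈ E, ∃ a b, e = s(a, b) ∧ G.Adj a b ∧ a ∈ W ∧ b ∈ W

/-- potential counting degree surplus over 2 at vertices outside `S`. -/
def Phi (S W : Finset V) (E : Finset (Sym2 V)) : ℤ :=
  ∑ z ∈ W \ S, ((degE E z : ℤ) - 2)

/-- min-degree-2 invariant outside `S`. -/
def DegOK (S W : Finset V) (E : Finset (Sym2 V)) : Prop :=
  ∀ z ∈ W, z ∉ S → 2 ≤ degE E z

/-- the master potential. -/
def Qf (d : ℕ) (S W : Finset V) (E : Finset (Sym2 V)) : ℤ :=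
  (4 * d + 4) * (E.card : ℤ) - (5 * d + 2) * (W.card : ℤ) - (d + 2) * Phi S W E

lemma degE_mono {E E' : Finset (Sym2 V)} (h : E ⊆ E') (z : V) : degE E z ≤ degE E' z :=
  card_le_card (filter_subset_filter _ h)

lemma degE_insert {E : Finset (Sym2 V)} {e : Sym2 V} (he : e ∉ E) (z : V) :
    degE (insert e E) z = degE E z + if z ∈ e then 1 else 0 := by
  unfold degE
  rw [filter_insert]
  split_ifs with h
  · rw [card_insert_of_notMem (fun hc => he (mem_of_mem_filter _ hc))]
  · simp

lemma degE_eq_zero {G : SimpleGraph V} {W : Finset V} {E : Finset (Sym2 V)}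
    (hok : EdgesOK G W E) {u : V} (hu : u ∉ W) : degE E u = 0 := by
  unfold degE
  rw [card_eq_zero, filter_eq_empty_iff]
  intro e heE hue
  obtain ⟨a, b, rfl, -, haW, hbW⟩ := hok e heE
  rcases Sym2.mem_iff.1 hue with rfl | rfl
  · exact hu haW
  · exact hu hbW

lemma edge_mem_vert {G : SimpleGraph V} {W : Finset V} {E : Finset (Sym2 V)}
    (hok : EdgesOK G W E) {a b : V} (h : s(a, b) ∈ E) : a ∈ W ∧ b ∈ W := by
  obtain ⟨a', b', he, -, ha', hb'⟩ := hok _ h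
  rw [Sym2.eq_iff] at he
  rcases he with ⟨rfl, rfl⟩ | ⟨rfl, rfl⟩ <;> exact ⟨‹_›, ‹_›⟩

lemma edgesOK_insert_vert {G : SimpleGraph V} {W : Finset V} {E : Finset (Sym2 V)}
    (hok : EdgesOK G W E) (u : V) : EdgesOK G (insert u W) E := by
  intro e he
  obtain ⟨a, b, h1, h2, h3, h4⟩ := hok e he
  exact ⟨a, b, h1, h2, mem_insert_of_mem h3, mem_insert_of_mem h4⟩

lemma edgesOK_insert_edge {G : SimpleGraph V} {W : Finset V} {E : Finset (Sym2 V)}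
    (hok : EdgesOK G W E) {a b : V} (hadj : G.Adj a b) (ha : a ∈ W) (hb : b ∈ W) :
    EdgesOK G W (insert s(a, b) E) := by
  intro e he
  rcases mem_insert.1 he with rfl | he
  · exact ⟨a, b, rfl, hadj, ha, hb⟩
  · exact hok e he

/-- two distinct incident edges give degree ≥ 2. -/
lemma two_le_degE {E : Finset (Sym2 V)} {z : V} {e₁ e₂ : Sym2 V} (h₁ : e₁ ∈ E) (h₂ : e₂ ∈ E)
    (hne : e₁ ≠ e₂) (hz₁ : z ∈ e₁) (hz₂ : z ∈ e₂) : 2 ≤ degE E z := by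
  have : ({e₁, e₂} : Finset (Sym2 V)) ⊆ E.filter (fun e => z ∈ e) := by
    intro e he
    rcases mem_insert.1 he with rfl | he
    · exact mem_filter.2 ⟨h₁, hz₁⟩
    · rw [mem_singleton] at he; subst he; exact mem_filter.2 ⟨h₂, hz₂⟩
  calc 2 = ({e₁, e₂} : Finset (Sym2 V)).card := (card_pair hne).symm
    _ ≤ _ := card_le_card this
    _ = degE E z := rfl

lemma Phi_insert_edge (S W : Finset V) {E : Finset (Sym2 V)} {a b : V} (hne : a ≠ b)
    (hE : s(a, b) ∉ E) :
    Phi S W (insert s(a, b) E) =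
      Phi S W E + (if a ∈ W ∧ a ∉ S then 1 else 0) + (if b ∈ W ∧ b ∉ S then 1 else 0) := by
  unfold Phi
  have key : ∀ z ∈ W \ S, ((degE (insert s(a, b) E) z : ℤ) - 2) =
      ((degE E z : ℤ) - 2) + ((if z = a then (1:ℤ) else 0) + (if z = b then 1 else 0)) := by
    intro z _
    rw [degE_insert hE]
    have h2 : (if z ∈ s(a, b) then (1:ℤ) else 0)
        = (if z = a then 1 else 0) + (if z = b then 1 else 0) := by
      simp only [Sym2.mem_iff]
      by_cases h1 : z = a <;> by_cases hzb : z = b <;> simp_all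
    push_cast
    rw [h2]; ring
  rw [Finset.sum_congr rfl key, Finset.sum_add_distrib, Finset.sum_add_distrib,
    Finset.sum_ite_eq' (W \ S) a (fun _ => (1:ℤ)), Finset.sum_ite_eq' (W \ S) b (fun _ => (1:ℤ))]
  simp only [Finset.mem_sdiff]
  ring

lemma Phi_insert_vert (S W : Finset V) (E : Finset (Sym2 V)) {u : V} (huW : u ∉ W) :
    Phi S (insert u W) E = Phi S W E + (if u ∈ S then 0 else ((degE E u : ℤ) - 2)) := by
  unfold Phi
  by_cases huS : u ∈ S
  · rw [if_pos huS]
    have : insert u W \ S = W \ S := by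
      ext z; simp only [Finset.mem_sdiff, Finset.mem_insert]
      constructor
      · rintro ⟨rfl | hz, hzS⟩
        · exact absurd huS hzS
        · exact ⟨hz, hzS⟩
      · rintro ⟨hz, hzS⟩; exact ⟨Or.inr hz, hzS⟩
    rw [this]; ring
  · rw [if_neg huS]
    have h1 : insert u W \ S = insert u (W \ S) := by
      ext z; simp only [Finset.mem_sdiff, Finset.mem_insert]
      constructor
      · rintro ⟨rfl | hz, hzS⟩
        · exact Or.inl rfl
        · exact Or.inr ⟨hz, hzS⟩
      · rintro (rfl | ⟨hz, hzS⟩)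
        · exact ⟨Or.inl rfl, huS⟩
        · exact ⟨Or.inr hz, hzS⟩
    have h2 : u ∉ W \ S := fun hc => huW (Finset.mem_sdiff.1 hc).1
    rw [h1, Finset.sum_insert h2]; ring

/-- reclassifying `v` (moving it into `S`). -/
lemma Phi_insert_S (S W : Finset V) (E : Finset (Sym2 V)) {v : V} (hvW : v ∈ W) (hvS : v ∉ S) :
    Phi (insert v S) W E = Phi S W E - ((degE E v : ℤ) - 2) := by
  unfold Phi
  have h1 : W \ S = insert v (W \ insert v S) := by
    ext z; simp only [Finset.mem_sdiff, Finset.mem_insert]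
    constructor
    · rintro ⟨hz, hzS⟩
      by_cases hzv : z = v
      · exact Or.inl hzv
      · exact Or.inr ⟨hz, fun h => h.elim hzv hzS⟩
    · rintro (rfl | ⟨hz, hzS⟩)
      · exact ⟨hvW, hvS⟩
      · exact ⟨hz, fun h => hzS (Or.inr h)⟩
  have h2 : v ∉ W \ insert v S := by
    simp [Finset.mem_sdiff]
  rw [h1, Finset.sum_insert h2]; ring

lemma Phi_insert_S_not_mem (S W : Finset V) (E : Finset (Sym2 V)) {v : V} (hvW : v ∉ W) :
    Phi (insert v S) W E = Phi S W E := by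
  unfold Phi
  congr 1
  ext z; simp only [Finset.mem_sdiff, Finset.mem_insert]
  constructor
  · rintro ⟨hz, hzS⟩; exact ⟨hz, fun h => hzS (Or.inr h)⟩
  · rintro ⟨hz, hzS⟩
    refine ⟨hz, ?_⟩
    rintro (rfl | h)
    · exact hvW hz
    · exact hzS h

lemma Phi_nonneg {S W : Finset V} {E : Finset (Sym2 V)} (h : DegOK S W E) :
    0 ≤ Phi S W E := by
  unfold Phi
  apply Finset.sum_nonneg
  intro z hz
  rw [Finset.mem_sdiff] at hz
  have := h z hz.1 hz.2
  omega

/-- `Qf` change when inserting a new edge. -/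
lemma Qf_insert_edge (d : ℕ) (S W : Finset V) {E : Finset (Sym2 V)} {a b : V} (hne : a ≠ b)
    (hE : s(a, b) ∉ E) :
    Qf d S W (insert s(a, b) E) =
      Qf d S W E + (4 * d + 4)
        - (d + 2) * ((if a ∈ W ∧ a ∉ S then 1 else 0) + (if b ∈ W ∧ b ∉ S then 1 else 0)) := by
  unfold Qf
  rw [Phi_insert_edge S W hne hE, Finset.card_insert_of_notMem hE]
  push_cast
  ring

/-- `Qf` change when inserting a fresh vertex not in `S` (degree 0 by `EdgesOK`). -/
lemma Qf_insert_vert {G : SimpleGraph V} (d : ℕ) (S W : Finset V) {E : Finset (Sym2 V)}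
    (hok : EdgesOK G W E) {u : V} (huW : u ∉ W) (huS : u ∉ S) :
    Qf d S (insert u W) E = Qf d S W E - (3 * d - 2) := by
  unfold Qf
  rw [Phi_insert_vert S W E huW, if_neg huS, degE_eq_zero hok huW,
    Finset.card_insert_of_notMem huW]
  push_cast
  ring

/-- inserting any valid edge never decreases `Qf`. -/
lemma add_edge_nonneg {G : SimpleGraph V} (d : ℕ) (S' W : Finset V) {E : Finset (Sym2 V)}
    (hok : EdgesOK G W E) {a b : V} (hadj : G.Adj a b) (ha : a ∈ W) (hb : b ∈ W) :
    ∃ E', E ⊆ E' ∧ EdgesOK G W E' ∧ s(a, b) ∈ E' ∧ (∀ e ∈ E', e ∈ E ∨ e = s(a, b)) ∧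
      Qf d S' W E ≤ Qf d S' W E' := by
  by_cases h : s(a, b) ∈ E
  · exact ⟨E, Finset.Subset.refl _, hok, h, fun e he => Or.inl he, le_refl _⟩
  · refine ⟨insert s(a, b) E, Finset.subset_insert _ _, edgesOK_insert_edge hok hadj ha hb,
      Finset.mem_insert_self _ _, ?_, ?_⟩
    · intro e he
      rcases Finset.mem_insert.1 he with rfl | he
      · exact Or.inr rfl
      · exact Or.inl he
    · rw [Qf_insert_edge d S' W hadj.ne h]
      have h1 : (if a ∈ W ∧ a ∉ S' then (1:ℤ) else 0) ≤ 1 := by split_ifs <;> norm_num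
      have h2 : (if b ∈ W ∧ b ∉ S' then (1:ℤ) else 0) ≤ 1 := by split_ifs <;> norm_num
      have hd : (0:ℤ) ≤ (d:ℤ) := Int.natCast_nonneg d
      nlinarith

lemma degOK_of_subset {S W : Finset V} {E E' : Finset (Sym2 V)} (h : DegOK S W E)
    (hE : E ⊆ E') : DegOK S W E' :=
  fun z hz hzS => le_trans (h z hz hzS) (degE_mono hE z)

lemma path_step {G : SimpleGraph V} {d : ℕ} (hd : 3 ≤ d) {v u : V} {S0 W : Finset V}
    {E : Finset (Sym2 V)}
    (hSW : insert v S0 ⊆ W) (hok : EdgesOK G W E) (hdeg : DegOK (insert v S0) W E)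
    (hadj : G.Adj v u) (hnear : Near2 G v ↑S0 u) :
    ∃ W' E', W ⊆ W' ∧ E ⊆ E' ∧ EdgesOK G W' E' ∧ DegOK (insert v S0) W' E' ∧
      W'.card ≤ W.card + 2 ∧
      (∀ y, s(v, y) ∈ E' → s(v, y) ∈ E ∨ y = u) ∧
      Qf d (insert v S0) W E + ((2 * d + 4) - (2 * d + 4) * (if s(v, u) ∈ E then 1 else 0))
        ≤ Qf d (insert v S0) W' E' ∧
      ((∀ z ∈ W, z ∈ insert v S0) → s(v, u) ∉ E →
        Qf d (insert v S0) W E + (2 * d + 8) ≤ Qf d (insert v S0) W' E') := by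
  have hdint : (3:ℤ) ≤ (d:ℤ) := by exact_mod_cast hd
  have hvW : v ∈ W := hSW (Finset.mem_insert_self v S0)
  have hvu : v ≠ u := hadj.ne
  have huv : u ≠ v := hadj.ne'
  have cv : ¬(v ∈ W ∧ v ∉ insert v S0) := fun h => h.2 (Finset.mem_insert_self _ _)
  by_cases h0 : u ∈ S0
  · -- CASE 0 : u ∈ S0
    have huW : u ∈ W := hSW (Finset.mem_insert_of_mem h0)
    have huS' : u ∈ insert v S0 := Finset.mem_insert_of_mem h0
    by_cases he : s(v, u) ∈ E
    · refine ⟨W, E, Finset.Subset.refl _, Finset.Subset.refl _, hok, hdeg, by omega,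
        fun y hy => Or.inl hy, ?_, fun _ hne => absurd he hne⟩
      rw [if_pos he]; linarith
    · refine ⟨W, insert s(v, u) E, Finset.Subset.refl _, Finset.subset_insert _ _,
        edgesOK_insert_edge hok hadj hvW huW, degOK_of_subset hdeg (Finset.subset_insert _ _),
        by omega, ?_, ?_, ?_⟩
      · intro y hy
        rcases Finset.mem_insert.1 hy with h | h
        · exact Or.inr (Sym2.congr_right.1 h)
        · exact Or.inl h
      · rw [if_neg he, Qf_insert_edge d _ W hadj.ne he, if_neg cv,
          if_neg (fun h : u ∈ W ∧ u ∉ insert v S0 => h.2 huS')]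
        linarith
      · intro _ _
        rw [Qf_insert_edge d _ W hadj.ne he, if_neg cv,
          if_neg (fun h : u ∈ W ∧ u ∉ insert v S0 => h.2 huS')]
        linarith
  · by_cases h1 : ∃ x ∈ S0, x ≠ v ∧ G.Adj u x
    · -- CASE 1 : distance 1 from S0
      obtain ⟨x, hxS0, hxv, hux⟩ := h1
      have huS0 : u ∉ S0 := h0
      have huS' : u ∉ insert v S0 := by simp [huv, huS0]
      have hxW : x ∈ W := hSW (Finset.mem_insert_of_mem hxS0)
      have hxS' : x ∈ insert v S0 := Finset.mem_insert_of_mem hxS0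
      have hux_ne : u ≠ x := fun h => huS0 (h ▸ hxS0)
      have he12 : s(v, u) ≠ s(u, x) := by
        intro h
        rcases Sym2.eq_iff.1 h with ⟨h1', _⟩ | ⟨h1', _⟩
        · exact hvu h1'
        · exact hxv h1'.symm
      by_cases huW : u ∈ W
      · -- u already a vertex
        obtain ⟨E₁, hE₁sub, hok₁, he₂mem, hE₁new, hQ₁⟩ :=
          add_edge_nonneg (G := G) d (insert v S0) W hok hux huW hxW
        have hkill : ∀ y, s(v, y) = s(u, x) → False := by
          intro y hy
          rcases Sym2.eq_iff.1 hy with ⟨h1', _⟩ | ⟨h1', _⟩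
          · exact hvu h1'
          · exact hxv h1'.symm
        by_cases he1 : s(v, u) ∈ E
        · refine ⟨W, E₁, Finset.Subset.refl _, hE₁sub, hok₁,
            degOK_of_subset hdeg hE₁sub, by omega, ?_, ?_, fun _ hne => absurd he1 hne⟩
          · intro y hy
            rcases hE₁new _ hy with h | h
            · exact Or.inl h
            · exact absurd h (fun hc => hkill y hc)
          · rw [if_pos he1]; linarith
        · have he1' : s(v, u) ∉ E₁ := by
            intro hc
            rcases hE₁new _ hc with h | h
            · exact he1 h
            · exact he12 h
          refine ⟨W, insert s(v, u) E₁, Finset.Subset.refl _,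
            le_trans hE₁sub (Finset.subset_insert _ _),
            edgesOK_insert_edge hok₁ hadj hvW huW,
            degOK_of_subset hdeg (le_trans hE₁sub (Finset.subset_insert _ _)), by omega,
            ?_, ?_, ?_⟩
          · intro y hy
            rcases Finset.mem_insert.1 hy with h | h
            · exact Or.inr (Sym2.congr_right.1 h)
            · rcases hE₁new _ h with h' | h'
              · exact Or.inl h'
              · exact absurd h' (fun hc => hkill y hc)
          · rw [if_neg he1, Qf_insert_edge d _ W hadj.ne he1', if_neg cv,
              if_pos ⟨huW, huS'⟩]
            linarith
          · intro hall _
            exact absurd (hall u huW) huS'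
      · -- u fresh
        have he2 : s(u, x) ∉ E := fun hc => huW (edge_mem_vert hok hc).1
        have he1 : s(v, u) ∉ E := fun hc => huW (edge_mem_vert hok hc).2
        have huW' : u ∈ insert u W := Finset.mem_insert_self _ _
        have hokv := edgesOK_insert_vert hok u
        have hok2 := edgesOK_insert_edge hokv hux huW' (Finset.mem_insert_of_mem hxW)
        have he1'' : s(v, u) ∉ insert s(u, x) E := by
          intro hc
          rcases Finset.mem_insert.1 hc with h | h
          · exact he12 h
          · exact he1 h
        have hQa := Qf_insert_vert (G := G) d (insert v S0) W hok huW huS'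
        have hQb := Qf_insert_edge (V := V) d (insert v S0) (insert u W) hux.ne he2
        have hQc := Qf_insert_edge (V := V) d (insert v S0) (insert u W)
          (hadj.ne) he1''
        rw [if_pos ⟨huW', huS'⟩,
          if_neg (fun h : x ∈ insert u W ∧ x ∉ insert v S0 => h.2 hxS')] at hQb
        rw [if_neg (fun h : v ∈ insert u W ∧ v ∉ insert v S0 =>
            h.2 (Finset.mem_insert_self _ _)), if_pos ⟨huW', huS'⟩] at hQc
        refine ⟨insert u W, insert s(v, u) (insert s(u, x) E), Finset.subset_insert _ _,
          le_trans (Finset.subset_insert _ _) (Finset.subset_insert _ _),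
          edgesOK_insert_edge hok2 hadj (Finset.mem_insert_of_mem hvW) huW', ?_,
          by have := Finset.card_insert_le u W; omega, ?_, ?_, ?_⟩
        · intro z hz hzS
          rcases Finset.mem_insert.1 hz with rfl | hz
          · exact two_le_degE (Finset.mem_insert_self _ _)
              (Finset.mem_insert_of_mem (Finset.mem_insert_self _ _)) he12
              (Sym2.mem_iff.2 (Or.inr rfl)) (Sym2.mem_iff.2 (Or.inl rfl))
          · exact le_trans (hdeg z hz hzS)
              (degE_mono (le_trans (Finset.subset_insert _ _) (Finset.subset_insert _ _)) z)
        · intro y hy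
          rcases Finset.mem_insert.1 hy with h | h
          · exact Or.inr (Sym2.congr_right.1 h)
          · rcases Finset.mem_insert.1 h with h' | h'
            · rcases Sym2.eq_iff.1 h' with ⟨h1', _⟩ | ⟨h1', _⟩
              · exact absurd h1' hvu
              · exact absurd h1'.symm hxv
            · exact Or.inl h'
        · rw [if_neg he1, hQc, hQb, hQa]; linarith
        · intro _ _; rw [hQc, hQb, hQa]; linarith
    · -- CASE 2 : distance 2 from S0
      have h2 : ∃ x ∈ S0, ∃ w, x ≠ v ∧ w ≠ v ∧ G.Adj u w ∧ G.Adj w x := by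
        rcases hnear with h | h | h
        · exact absurd h h0
        · obtain ⟨x, hx, hxv, hux⟩ := h
          exact absurd ⟨x, hx, hxv, hux⟩ h1
        · obtain ⟨x, hx, w, h3, h4, h5, h6⟩ := h
          exact ⟨x, hx, w, h3, h4, h5, h6⟩
      obtain ⟨x, hxS0, w, hxv, hwv, huw, hwx⟩ := h2
      have huS0 : u ∉ S0 := h0
      have hwS0 : w ∉ S0 := fun hc => h1 ⟨w, hc, hwv, huw⟩
      have hwx_ne : w ≠ x := fun hc => h1 ⟨x, hxS0, hxv, hc ▸ huw⟩
      have hux_ne : u ≠ x := fun hc => huS0 (hc ▸ hxS0)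
      have huw_ne : u ≠ w := huw.ne
      have huS' : u ∉ insert v S0 := by simp [huv, huS0]
      have hwS' : w ∉ insert v S0 := by simp [hwv, hwS0]
      have hxW : x ∈ W := hSW (Finset.mem_insert_of_mem hxS0)
      have hxS' : x ∈ insert v S0 := Finset.mem_insert_of_mem hxS0
      have d12 : s(v, u) ≠ s(u, w) := by
        intro h
        rcases Sym2.eq_iff.1 h with ⟨h1', _⟩ | ⟨h1', _⟩
        · exact hvu h1'
        · exact hwv h1'.symm
      have d13 : s(v, u) ≠ s(w, x) := by
        intro h
        rcases Sym2.eq_iff.1 h with ⟨h1', _⟩ | ⟨h1', _⟩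
        · exact hwv h1'.symm
        · exact hxv h1'.symm
      have d23 : s(u, w) ≠ s(w, x) := by
        intro h
        rcases Sym2.eq_iff.1 h with ⟨h1', h2'⟩ | ⟨h1', _⟩
        · exact huw_ne h1'
        · exact hux_ne h1'
      have hkill2 : ∀ y, s(v, y) = s(u, w) → False := by
        intro y hy
        rcases Sym2.eq_iff.1 hy with ⟨h1', _⟩ | ⟨h1', _⟩
        · exact hvu h1'
        · exact hwv h1'.symm
      have hkill3 : ∀ y, s(v, y) = s(w, x) → False := by
        intro y hy
        rcases Sym2.eq_iff.1 hy with ⟨h1', _⟩ | ⟨h1', _⟩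
        · exact hwv h1'.symm
        · exact hxv h1'.symm
      by_cases huW : u ∈ W
      · by_cases hwW : w ∈ W
        · -- (d) both old
          obtain ⟨E₁, hE₁sub, hok₁, hme₃, hE₁new, hQ₁⟩ :=
            add_edge_nonneg (G := G) d (insert v S0) W hok hwx hwW hxW
          obtain ⟨E₂, hE₂sub, hok₂, hme₂, hE₂new, hQ₂⟩ :=
            add_edge_nonneg (G := G) d (insert v S0) W hok₁ huw huW hwW
          have htrace : ∀ e ∈ E₂, e ∈ E ∨ e = s(u, w) ∨ e = s(w, x) := by
            intro e he
            rcases hE₂new e he with h | h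
            · rcases hE₁new e h with h' | h'
              · exact Or.inl h'
              · exact Or.inr (Or.inr h')
            · exact Or.inr (Or.inl h)
          by_cases he1 : s(v, u) ∈ E
          · refine ⟨W, E₂, Finset.Subset.refl _, le_trans hE₁sub hE₂sub, hok₂,
              degOK_of_subset hdeg (le_trans hE₁sub hE₂sub), by omega, ?_, ?_,
              fun _ hne => absurd he1 hne⟩
            · intro y hy
              rcases htrace _ hy with h | h | h
              · exact Or.inl h
              · exact absurd h (fun hc => hkill2 y hc)
              · exact absurd h (fun hc => hkill3 y hc)
            · rw [if_pos he1]; linarith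
          · have he1' : s(v, u) ∉ E₂ := by
              intro hc
              rcases htrace _ hc with h | h | h
              · exact he1 h
              · exact d12 h
              · exact d13 h
            refine ⟨W, insert s(v, u) E₂, Finset.Subset.refl _,
              le_trans (le_trans hE₁sub hE₂sub) (Finset.subset_insert _ _),
              edgesOK_insert_edge hok₂ hadj hvW huW,
              degOK_of_subset hdeg
                (le_trans (le_trans hE₁sub hE₂sub) (Finset.subset_insert _ _)),
              by omega, ?_, ?_, ?_⟩
            · intro y hy
              rcases Finset.mem_insert.1 hy with h | h
              · exact Or.inr (Sym2.congr_right.1 h)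
              · rcases htrace _ h with h' | h' | h'
                · exact Or.inl h'
                · exact absurd h' (fun hc => hkill2 y hc)
                · exact absurd h' (fun hc => hkill3 y hc)
            · rw [if_neg he1, Qf_insert_edge d _ W hadj.ne he1', if_neg cv,
                if_pos ⟨huW, huS'⟩]
              linarith
            · intro hall _
              exact absurd (hall u huW) huS'
        · -- (c) u old, w fresh
          have he3 : s(w, x) ∉ E := fun hc => hwW (edge_mem_vert hok hc).1
          have he2 : s(u, w) ∉ E := fun hc => hwW (edge_mem_vert hok hc).2
          have hwW' : w ∈ insert w W := Finset.mem_insert_self _ _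
          have hokv := edgesOK_insert_vert hok w
          have hok3 := edgesOK_insert_edge hokv hwx hwW' (Finset.mem_insert_of_mem hxW)
          have he2'' : s(u, w) ∉ insert s(w, x) E := by
            intro hc
            rcases Finset.mem_insert.1 hc with h | h
            · exact d23 h
            · exact he2 h
          have hok4 := edgesOK_insert_edge hok3 huw (Finset.mem_insert_of_mem huW) hwW'
          have hQa := Qf_insert_vert (G := G) d (insert v S0) W hok hwW hwS'
          have hQb := Qf_insert_edge (V := V) d (insert v S0) (insert w W) hwx.ne he3
          have hQc := Qf_insert_edge (V := V) d (insert v S0) (insert w W) huw.ne he2''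
          rw [if_pos ⟨hwW', hwS'⟩,
            if_neg (fun h : x ∈ insert w W ∧ x ∉ insert v S0 => h.2 hxS')] at hQb
          rw [if_pos ⟨Finset.mem_insert_of_mem huW, huS'⟩, if_pos ⟨hwW', hwS'⟩] at hQc
          have hdeg' : DegOK (insert v S0) (insert w W)
              (insert s(u, w) (insert s(w, x) E)) := by
            intro z hz hzS
            rcases Finset.mem_insert.1 hz with rfl | hz
            · exact two_le_degE (Finset.mem_insert_self _ _)
                (Finset.mem_insert_of_mem (Finset.mem_insert_self _ _)) d23
                (Sym2.mem_iff.2 (Or.inr rfl)) (Sym2.mem_iff.2 (Or.inl rfl))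
            · exact le_trans (hdeg z hz hzS)
                (degE_mono (le_trans (Finset.subset_insert _ _) (Finset.subset_insert _ _)) z)
          have hvedge : ∀ y, s(v, y) ∈ insert s(u, w) (insert s(w, x) E) →
              s(v, y) ∈ E ∨ y = u := by
            intro y hy
            rcases Finset.mem_insert.1 hy with h | h
            · exact absurd h (fun hc => hkill2 y hc)
            · rcases Finset.mem_insert.1 h with h' | h'
              · exact absurd h' (fun hc => hkill3 y hc)
              · exact Or.inl h'
          by_cases he1 : s(v, u) ∈ E
          · refine ⟨insert w W, insert s(u, w) (insert s(w, x) E), Finset.subset_insert _ _,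
              le_trans (Finset.subset_insert _ _) (Finset.subset_insert _ _), hok4, hdeg',
              by have := Finset.card_insert_le w W; omega, hvedge, ?_,
              fun _ hne => absurd he1 hne⟩
            rw [if_pos he1, hQc, hQb, hQa]; linarith
          · have he1' : s(v, u) ∉ insert s(u, w) (insert s(w, x) E) := by
              intro hc
              rcases Finset.mem_insert.1 hc with h | h
              · exact d12 h
              · rcases Finset.mem_insert.1 h with h' | h'
                · exact d13 h'
                · exact he1 h'
            have hQd := Qf_insert_edge (V := V) d (insert v S0) (insert w W) hadj.ne he1'
            rw [if_neg (fun h : v ∈ insert w W ∧ v ∉ insert v S0 =>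
                h.2 (Finset.mem_insert_self _ _)),
              if_pos ⟨Finset.mem_insert_of_mem huW, huS'⟩] at hQd
            refine ⟨insert w W, insert s(v, u) (insert s(u, w) (insert s(w, x) E)),
              Finset.subset_insert _ _,
              le_trans (le_trans (Finset.subset_insert _ _) (Finset.subset_insert _ _))
                (Finset.subset_insert _ _),
              edgesOK_insert_edge hok4 hadj (Finset.mem_insert_of_mem hvW)
                (Finset.mem_insert_of_mem huW),
              degOK_of_subset hdeg' (Finset.subset_insert _ _),
              by have := Finset.card_insert_le w W; omega, ?_, ?_, ?_⟩
            · intro y hy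
              rcases Finset.mem_insert.1 hy with h | h
              · exact Or.inr (Sym2.congr_right.1 h)
              · exact hvedge y h
            · rw [if_neg he1, hQd, hQc, hQb, hQa]; linarith
            · intro hall _
              exact absurd (hall u huW) huS'
      · by_cases hwW : w ∈ W
        · -- (b) u fresh, w old
          have he1 : s(v, u) ∉ E := fun hc => huW (edge_mem_vert hok hc).2
          have he2 : s(u, w) ∉ E := fun hc => huW (edge_mem_vert hok hc).1
          obtain ⟨E₁, hE₁sub, hok₁, hme₃, hE₁new, hQ₁⟩ :=
            add_edge_nonneg (G := G) d (insert v S0) W hok hwx hwW hxW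
          have he2' : s(u, w) ∉ E₁ := by
            intro hc
            rcases hE₁new _ hc with h | h
            · exact he2 h
            · exact d23 h
          have he1' : s(v, u) ∉ insert s(u, w) E₁ := by
            intro hc
            rcases Finset.mem_insert.1 hc with h | h
            · exact d12 h
            · rcases hE₁new _ h with h' | h'
              · exact he1 h'
              · exact d13 h'
          have huW' : u ∈ insert u W := Finset.mem_insert_self _ _
          have hokv := edgesOK_insert_vert hok₁ u
          have hok2 := edgesOK_insert_edge hokv huw huW' (Finset.mem_insert_of_mem hwW)
          have hQa := Qf_insert_vert (G := G) d (insert v S0) W hok₁ huW huS'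
          have hQb := Qf_insert_edge (V := V) d (insert v S0) (insert u W) huw.ne he2'
          have hQc := Qf_insert_edge (V := V) d (insert v S0) (insert u W) hadj.ne he1'
          rw [if_pos ⟨huW', huS'⟩, if_pos ⟨Finset.mem_insert_of_mem hwW, hwS'⟩] at hQb
          rw [if_neg (fun h : v ∈ insert u W ∧ v ∉ insert v S0 =>
              h.2 (Finset.mem_insert_self _ _)), if_pos ⟨huW', huS'⟩] at hQc
          refine ⟨insert u W, insert s(v, u) (insert s(u, w) E₁), Finset.subset_insert _ _,
            le_trans hE₁sub (le_trans (Finset.subset_insert _ _) (Finset.subset_insert _ _)),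
            edgesOK_insert_edge hok2 hadj (Finset.mem_insert_of_mem hvW) huW', ?_,
            by have := Finset.card_insert_le u W; omega, ?_, ?_, ?_⟩
          · intro z hz hzS
            rcases Finset.mem_insert.1 hz with rfl | hz
            · exact two_le_degE (Finset.mem_insert_self _ _)
                (Finset.mem_insert_of_mem (Finset.mem_insert_self _ _)) d12
                (Sym2.mem_iff.2 (Or.inr rfl)) (Sym2.mem_iff.2 (Or.inl rfl))
            · exact le_trans (hdeg z hz hzS)
                (degE_mono (le_trans hE₁sub
                  (le_trans (Finset.subset_insert _ _) (Finset.subset_insert _ _))) z)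
          · intro y hy
            rcases Finset.mem_insert.1 hy with h | h
            · exact Or.inr (Sym2.congr_right.1 h)
            · rcases Finset.mem_insert.1 h with h' | h'
              · exact absurd h' (fun hc => hkill2 y hc)
              · rcases hE₁new _ h' with h'' | h''
                · exact Or.inl h''
                · exact absurd h'' (fun hc => hkill3 y hc)
          · rw [if_neg he1, hQc, hQb, hQa]; linarith
          · intro hall _
            exact absurd (hall w hwW) hwS'
        · -- (a) both fresh
          have hwu_ne : w ≠ u := fun h => huw_ne h.symm
          have he1 : s(v, u) ∉ E := fun hc => huW (edge_mem_vert hok hc).2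
          have he2 : s(u, w) ∉ E := fun hc => huW (edge_mem_vert hok hc).1
          have he3 : s(w, x) ∉ E := fun hc => hwW (edge_mem_vert hok hc).1
          have huWw : u ∉ insert w W := by simp [huW, huw_ne]
          have hokw := edgesOK_insert_vert hok w
          have hokwu := edgesOK_insert_vert hokw u
          have hwW2 : w ∈ insert u (insert w W) :=
            Finset.mem_insert_of_mem (Finset.mem_insert_self _ _)
          have huW2 : u ∈ insert u (insert w W) := Finset.mem_insert_self _ _
          have hxW2 : x ∈ insert u (insert w W) :=
            Finset.mem_insert_of_mem (Finset.mem_insert_of_mem hxW)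
          have hvW2 : v ∈ insert u (insert w W) :=
            Finset.mem_insert_of_mem (Finset.mem_insert_of_mem hvW)
          have hok3 := edgesOK_insert_edge hokwu hwx hwW2 hxW2
          have he2'' : s(u, w) ∉ insert s(w, x) E := by
            intro hc
            rcases Finset.mem_insert.1 hc with h | h
            · exact d23 h
            · exact he2 h
          have hok4 := edgesOK_insert_edge hok3 huw huW2 hwW2
          have he1'' : s(v, u) ∉ insert s(u, w) (insert s(w, x) E) := by
            intro hc
            rcases Finset.mem_insert.1 hc with h | h
            · exact d12 h
            · rcases Finset.mem_insert.1 h with h' | h'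
              · exact d13 h'
              · exact he1 h'
          have hQa := Qf_insert_vert (G := G) d (insert v S0) W hok hwW hwS'
          have hQa2 := Qf_insert_vert (G := G) d (insert v S0) (insert w W) hokw huWw huS'
          have hQb := Qf_insert_edge (V := V) d (insert v S0) (insert u (insert w W))
            hwx.ne he3
          have hQc := Qf_insert_edge (V := V) d (insert v S0) (insert u (insert w W))
            huw.ne he2''
          have hQd := Qf_insert_edge (V := V) d (insert v S0) (insert u (insert w W))
            hadj.ne he1''
          rw [if_pos ⟨hwW2, hwS'⟩,
            if_neg (fun h : x ∈ insert u (insert w W) ∧ x ∉ insert v S0 => h.2 hxS')] at hQb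
          rw [if_pos ⟨huW2, huS'⟩, if_pos ⟨hwW2, hwS'⟩] at hQc
          rw [if_neg (fun h : v ∈ insert u (insert w W) ∧ v ∉ insert v S0 =>
              h.2 (Finset.mem_insert_self _ _)), if_pos ⟨huW2, huS'⟩] at hQd
          refine ⟨insert u (insert w W),
            insert s(v, u) (insert s(u, w) (insert s(w, x) E)),
            le_trans (Finset.subset_insert _ _) (Finset.subset_insert _ _),
            le_trans (Finset.subset_insert _ _)
              (le_trans (Finset.subset_insert _ _) (Finset.subset_insert _ _)),
            edgesOK_insert_edge hok4 hadj hvW2 huW2, ?_,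
            by have h1 := Finset.card_insert_le w W
               have h2 := Finset.card_insert_le u (insert w W); omega, ?_, ?_, ?_⟩
          · intro z hz hzS
            rcases Finset.mem_insert.1 hz with rfl | hz
            · exact two_le_degE (Finset.mem_insert_self _ _)
                (Finset.mem_insert_of_mem (Finset.mem_insert_self _ _)) d12
                (Sym2.mem_iff.2 (Or.inr rfl)) (Sym2.mem_iff.2 (Or.inl rfl))
            · rcases Finset.mem_insert.1 hz with rfl | hz
              · refine two_le_degE
                  (Finset.mem_insert_of_mem (Finset.mem_insert_self _ _))
                  (Finset.mem_insert_of_mem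
                    (Finset.mem_insert_of_mem (Finset.mem_insert_self _ _))) d23
                  (Sym2.mem_iff.2 (Or.inr rfl)) (Sym2.mem_iff.2 (Or.inl rfl))
              · exact le_trans (hdeg z hz hzS)
                  (degE_mono (le_trans (Finset.subset_insert _ _)
                    (le_trans (Finset.subset_insert _ _) (Finset.subset_insert _ _))) z)
          · intro y hy
            rcases Finset.mem_insert.1 hy with h | h
            · exact Or.inr (Sym2.congr_right.1 h)
            · rcases Finset.mem_insert.1 h with h' | h'
              · exact absurd h' (fun hc => hkill2 y hc)
              · rcases Finset.mem_insert.1 h' with h'' | h''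
                · exact absurd h'' (fun hc => hkill3 y hc)
                · exact Or.inl h''
          · rw [if_neg he1, hQd, hQc, hQb, hQa2, hQa]; linarith
          · intro _ _
            rw [hQd, hQc, hQb, hQa2, hQa]; linarith

lemma fold_paths {G : SimpleGraph V} {d : ℕ} (hd : 3 ≤ d) {v : V} {S0 : Finset V} :
    ∀ F : Finset V, (∀ u ∈ F, G.Adj v u ∧ Near2 G v ↑S0 u) →
    ∀ W E, insert v S0 ⊆ W → EdgesOK G W E → DegOK (insert v S0) W E →
    ∃ W' E', W ⊆ W' ∧ E ⊆ E' ∧ EdgesOK G W' E' ∧ DegOK (insert v S0) W' E' ∧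
      W'.card ≤ W.card + 2 * F.card ∧
      (∀ y, s(v, y) ∈ E' → s(v, y) ∈ E ∨ y ∈ F) ∧
      Qf d (insert v S0) W E
        + (2 * d + 4) * ((F.card : ℤ) - ((F.filter (fun u => s(v, u) ∈ E)).card : ℤ))
        ≤ Qf d (insert v S0) W' E' ∧
      ((∀ z ∈ W, z ∈ insert v S0) → (∀ y, s(v, y) ∉ E) → F.Nonempty →
        Qf d (insert v S0) W E + (2 * d + 4) * F.card + 4 ≤ Qf d (insert v S0) W' E') := by
  intro F
  induction F using Finset.induction_on with
  | empty =>
    intro _ W E hSW hok hdeg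
    refine ⟨W, E, Finset.Subset.refl _, Finset.Subset.refl _, hok, hdeg, by simp,
      fun y hy => Or.inl hy, by simp, fun _ _ hne => absurd hne Finset.not_nonempty_empty⟩
  | @insert u F' hu ih =>
    intro hprops W E hSW hok hdeg
    obtain ⟨hadj, hnear⟩ := hprops u (Finset.mem_insert_self _ _)
    obtain ⟨W₁, E₁, hWW₁, hEE₁, hok₁, hdeg₁, hcard₁, hved₁, hQ₁, hQ₁c⟩ :=
      path_step hd hSW hok hdeg hadj hnear
    obtain ⟨W', E', hW₁W', hE₁E', hok', hdeg', hcard', hved', hQ', hQ'c⟩ :=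
      ih (fun u' hu' => hprops u' (Finset.mem_insert_of_mem hu'))
        W₁ E₁ (le_trans hSW hWW₁) hok₁ hdeg₁
    have hd4 : (0:ℤ) < 2 * (d:ℤ) + 4 := by positivity
    have hfsub : F'.filter (fun u' => s(v, u') ∈ E₁) ⊆ F'.filter (fun u' => s(v, u') ∈ E) := by
      intro u' hu'
      rw [Finset.mem_filter] at hu' ⊢
      refine ⟨hu'.1, ?_⟩
      rcases hved₁ u' hu'.2 with h | h
      · exact h
      · exact absurd (h ▸ hu'.1) hu
    have hfle : ((F'.filter (fun u' => s(v, u') ∈ E₁)).card : ℤ)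
        ≤ ((F'.filter (fun u' => s(v, u') ∈ E)).card : ℤ) := by
      exact_mod_cast Finset.card_le_card hfsub
    have hcardins : ((insert u F').card : ℤ) = (F'.card : ℤ) + 1 := by
      rw [Finset.card_insert_of_notMem hu]; push_cast; ring
    refine ⟨W', E', le_trans hWW₁ hW₁W', le_trans hEE₁ hE₁E', hok', hdeg', ?_, ?_, ?_, ?_⟩
    · rw [Finset.card_insert_of_notMem hu]; omega
    · intro y hy
      rcases hved' y hy with h | h
      · rcases hved₁ y h with h' | h'
        · exact Or.inl h'
        · exact Or.inr (h' ▸ Finset.mem_insert_self _ _)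
      · exact Or.inr (Finset.mem_insert_of_mem h)
    · have hfilins : ((insert u F').filter (fun u' => s(v, u') ∈ E)).card
          = (F'.filter (fun u' => s(v, u') ∈ E)).card
            + (if s(v, u) ∈ E then 1 else 0) := by
        rw [Finset.filter_insert]
        split_ifs with h
        · rw [Finset.card_insert_of_notMem (fun hc => hu (Finset.mem_filter.1 hc).1)]
        · simp
      rw [hfilins, hcardins]
      by_cases hsu : s(v, u) ∈ E
      · rw [if_pos hsu] at hQ₁ ⊢
        push_cast
        nlinarith [hQ₁, hQ', hfle]
      · rw [if_neg hsu] at hQ₁ ⊢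
        push_cast
        nlinarith [hQ₁, hQ', hfle]
    · intro hall hnoE _
      have hfl0 : (F'.filter (fun u' => s(v, u') ∈ E₁)) = ∅ := by
        rw [Finset.filter_eq_empty_iff]
        intro u' hu' hc
        rcases hved₁ u' hc with h | h
        · exact hnoE u' h
        · exact hu (h ▸ hu')
      have hQt := hQ₁c hall (hnoE u)
      rw [hfl0] at hQ'
      simp only [Finset.card_empty, Nat.cast_zero, sub_zero] at hQ'
      rw [hcardins]
      nlinarith [hQt, hQ']

lemma bad_le_deg (v : V) (F : Finset V) (E : Finset (Sym2 V)) :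
    (F.filter (fun u => s(v, u) ∈ E)).card ≤ degE E v := by
  unfold degE
  apply Finset.card_le_card_of_injOn (fun u => s(v, u))
  · intro u hu
    rw [Finset.mem_coe, Finset.mem_filter] at hu
    rw [Finset.mem_coe, Finset.mem_filter]
    exact ⟨hu.2, Sym2.mem_iff.2 (Or.inl rfl)⟩
  · intro a _ b _ h
    exact Sym2.congr_right.1 h

lemma one_step {G : SimpleGraph V} {d : ℕ} (hd : 3 ≤ d) {S W : Finset V}
    {E : Finset (Sym2 V)} {v : V} (k j : ℕ)
    (hSW : S ⊆ W) (hSc : S.card = k + j) (hWc : W.card ≤ k + (2 * d + 1) * j)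
    (hok : EdgesOK G W E) (hdeg : DegOK S W E)
    (hInv : (2*(d:ℤ)+2) * ((d:ℤ)-2) * j + (if j = 0 then -(4*(d:ℤ)+4) else 0)
      ≤ Qf d S W E + ((d:ℤ)-2) * ((2*(d:ℤ)+1)*j + k))
    (hvS : v ∉ S) (hcrit : CritRule G d ↑S v) :
    ∃ W' E', insert v S ⊆ W' ∧ W ⊆ W' ∧ E ⊆ E' ∧
      W'.card ≤ k + (2 * d + 1) * (j + 1) ∧ EdgesOK G W' E' ∧ DegOK (insert v S) W' E' ∧
      (2*(d:ℤ)+2) * ((d:ℤ)-2) * (j+1)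
        ≤ Qf d (insert v S) W' E' + ((d:ℤ)-2) * ((2*(d:ℤ)+1)*(j+1) + k) := by
  have hdint : (3:ℤ) ≤ (d:ℤ) := by exact_mod_cast hd
  obtain ⟨F₀, hF₀card, hF₀⟩ := hcrit
  obtain ⟨F, hFsub, hFcard⟩ := Finset.exists_subset_card_eq hF₀card
  have hprops : ∀ u ∈ F, G.Adj v u ∧ Near2 G v ↑S u := fun u hu => hF₀ u (hFsub hu)
  by_cases hvW : v ∈ W
  · -- v is already a vertex of H (then j ≥ 1)
    have hj1 : 1 ≤ j := by
      by_contra hj0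
      have hj0' : j = 0 := by omega
      subst hj0'
      have : W = S := (Finset.eq_of_subset_of_card_le hSW (by omega)).symm
      exact hvS (this ▸ hvW)
    have hSW' : insert v S ⊆ W := Finset.insert_subset hvW hSW
    have hdeg' : DegOK (insert v S) W E := fun z hz hzS' =>
      hdeg z hz (fun h => hzS' (Finset.mem_insert_of_mem h))
    obtain ⟨W', E', hWW', hEE', hok', hdeg'', hcard', hved', hQ', _⟩ :=
      fold_paths hd F hprops W E hSW' hok hdeg'
    have hQrel : Qf d (insert v S) W E
        = Qf d S W E + ((d:ℤ)+2) * ((degE E v : ℤ) - 2) := by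
      unfold Qf
      rw [Phi_insert_S S W E hvW hvS]
      ring
    have hB1 : ((F.filter (fun u => s(v, u) ∈ E)).card : ℤ) ≤ (degE E v : ℤ) := by
      exact_mod_cast bad_le_deg v F E
    have hB2 : ((F.filter (fun u => s(v, u) ∈ E)).card : ℤ) ≤ (d:ℤ) := by
      have := Finset.card_le_card (Finset.filter_subset (fun u => s(v, u) ∈ E) F)
      rw [hFcard] at this
      exact_mod_cast this
    have hdeg2 : 2 ≤ degE E v := hdeg v hvW hvS
    have hdeg2' : (2:ℤ) ≤ (degE E v : ℤ) := by exact_mod_cast hdeg2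
    refine ⟨W', E', le_trans hSW' hWW', hWW', hEE', ?_, hok', hdeg'', ?_⟩
    · have h2 := hcard'
      rw [hFcard] at h2
      have hq : (2*d+1)*(j+1) = (2*d+1)*j + (2*d+1) := by ring
      omega
    · rw [if_neg (by omega : ¬ j = 0)] at hInv
      rw [hFcard] at hQ'
      rw [hQrel] at hQ'
      push_cast at hQ' ⊢
      nlinarith [hQ', hInv, hB1, hB2, hdeg2']
  · -- v is a fresh vertex
    have hSW' : insert v S ⊆ insert v W :=
      Finset.insert_subset (Finset.mem_insert_self _ _)
        (le_trans hSW (Finset.subset_insert _ _))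
    have hok₁ := edgesOK_insert_vert hok v
    have hdeg₁ : DegOK (insert v S) (insert v W) E := by
      intro z hz hzS'
      rcases Finset.mem_insert.1 hz with rfl | hz
      · exact absurd (Finset.mem_insert_self _ _) hzS'
      · exact hdeg z hz (fun h => hzS' (Finset.mem_insert_of_mem h))
    have hQrel : Qf d (insert v S) (insert v W) E = Qf d S W E - (5*(d:ℤ)+2) := by
      unfold Qf
      rw [Phi_insert_vert (insert v S) W E hvW, if_pos (Finset.mem_insert_self _ _),
        Phi_insert_S_not_mem S W E hvW, Finset.card_insert_of_notMem hvW]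
      push_cast
      ring
    have hB0 : F.filter (fun u => s(v, u) ∈ E) = ∅ := by
      rw [Finset.filter_eq_empty_iff]
      intro u _ hc
      exact hvW (edge_mem_vert hok hc).1
    obtain ⟨W', E', hWW', hEE', hok', hdeg'', hcard', hved', hQ', hQ'c⟩ :=
      fold_paths hd F hprops (insert v W) E hSW' hok₁ hdeg₁
    refine ⟨W', E', le_trans hSW' hWW', le_trans (Finset.subset_insert _ _) hWW',
      hEE', ?_, hok', hdeg'', ?_⟩
    · have h1 := Finset.card_insert_le v W
      have h2 : W'.card ≤ (insert v W).card + 2 * F.card := hcard'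
      rw [hFcard] at h2
      have hq : (2*d+1)*(j+1) = (2*d+1)*j + (2*d+1) := by ring
      omega
    · by_cases hj0 : j = 0
      · -- first step : use the bonus clause
        subst hj0
        have hWS : W = S := (Finset.eq_of_subset_of_card_le hSW (by omega)).symm
        have hall : ∀ z ∈ insert v W, z ∈ insert v S := by
          intro z hz
          rcases Finset.mem_insert.1 hz with rfl | hz
          · exact Finset.mem_insert_self _ _
          · exact Finset.mem_insert_of_mem (hWS ▸ hz)
        have hnoE : ∀ y, s(v, y) ∉ E := fun y hc => hvW (edge_mem_vert hok hc).1
        have hFne : F.Nonempty := by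
          rw [← Finset.card_pos, hFcard]; omega
        have hQt := hQ'c hall hnoE hFne
        rw [hFcard, hQrel] at hQt
        rw [if_pos rfl] at hInv
        push_cast at hQt hInv ⊢
        nlinarith [hQt, hInv]
      · rw [hB0] at hQ'
        rw [hFcard, hQrel] at hQ'
        rw [if_neg hj0] at hInv
        simp only [Finset.card_empty, Nat.cast_zero, sub_zero] at hQ'
        push_cast at hQ' hInv ⊢
        nlinarith [hQ', hInv]

lemma buildup {G : SimpleGraph V} {d : ℕ} (hd : 3 ≤ d) (Xf : Finset V)
    (hstep : ∀ S : Finset V, Xf ⊆ S → S.card < 2 * Xf.card → ∃ v, v ∉ S ∧ CritRule G d ↑S v)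
    (E₀ : Finset (Sym2 V)) (hE₀ok : EdgesOK G Xf E₀) (hE₀card : Xf.card ≤ E₀.card + 1) :
    ∀ j, j ≤ Xf.card → ∃ S W E, Xf ⊆ S ∧ S ⊆ W ∧ S.card = Xf.card + j ∧
      W.card ≤ Xf.card + (2 * d + 1) * j ∧ EdgesOK G W E ∧ DegOK S W E ∧
      (2*(d:ℤ)+2) * ((d:ℤ)-2) * j + (if j = 0 then -(4*(d:ℤ)+4) else 0)
        ≤ Qf d S W E + ((d:ℤ)-2) * ((2*(d:ℤ)+1)*j + Xf.card) := by
  intro j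
  induction j with
  | zero =>
    intro _
    refine ⟨Xf, Xf, E₀, Finset.Subset.refl _, Finset.Subset.refl _, by omega, by omega,
      hE₀ok, fun z hz hzS => absurd hz hzS, ?_⟩
    have hPhi : Phi Xf Xf E₀ = 0 := by
      unfold Phi; rw [Finset.sdiff_self]; simp
    unfold Qf
    rw [hPhi]
    have h1 : ((Xf.card):ℤ) ≤ (E₀.card : ℤ) + 1 := by exact_mod_cast hE₀card
    have hdint : (3:ℤ) ≤ (d:ℤ) := by exact_mod_cast hd
    rw [if_pos rfl]
    push_cast
    nlinarith [h1, hdint]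
  | succ j ih =>
    intro hj
    obtain ⟨S, W, E, hXS, hSW, hSc, hWc, hok, hdeg, hInv⟩ := ih (by omega)
    obtain ⟨v, hvS, hcrit⟩ := hstep S hXS (by omega)
    obtain ⟨W', E', hSW', hWW', hEE', hWc', hok', hdeg', hInv'⟩ :=
      one_step hd Xf.card j hSW hSc hWc hok hdeg hInv hvS hcrit
    refine ⟨insert v S, W', E', le_trans hXS (Finset.subset_insert _ _), hSW',
      by rw [Finset.card_insert_of_notMem hvS]; omega, hWc', hok', hdeg', ?_⟩
    rw [if_neg (Nat.succ_ne_zero j)]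
    push_cast at hInv' ⊢
    linarith [hInv']

lemma exists_crit {G : SimpleGraph V} {d : ℕ} {X : Set V}
    (hcrit : 2 * X.ncard ≤ (CritSet G d X).ncard ∨ (CritSet G d X).Infinite)
    (S : Finset V) (hXS : X ⊆ ↑S) (hcard : S.card < 2 * X.ncard) :
    ∃ v, v ∉ S ∧ CritRule G d ↑S v := by
  by_contra h
  push_neg at h
  have hclosed : CritSet G d X ⊆ ↑S := by
    apply Set.sInter_subset_of_mem
    refine ⟨hXS, fun v hv => ?_⟩
    by_contra hvS
    exact h v hvS hv
  rcases hcrit with hc | hc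
  · have h1 : (CritSet G d X).ncard ≤ S.card := by
      have := Set.ncard_le_ncard hclosed (Finset.finite_toSet S)
      simpa [Set.ncard_coe_finset] using this
    omega
  · exact hc ((Finset.finite_toSet S).subset hclosed)

lemma conn_card_le {α : Type*} [Fintype α] (H : SimpleGraph α) (hc : H.Connected) :
    Fintype.card α ≤ (Set.toFinite H.edgeSet).toFinset.card + 1 := by
  classical
  obtain ⟨r⟩ := hc.nonempty
  set T := (Set.toFinite H.edgeSet).toFinset with hT
  have key : ∀ v : α, ∃ e : Sym2 α, v ≠ r →
      e ∈ T ∧ ∃ y, e = s(v, y) ∧ H.dist y r < H.dist v r := by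
    intro v
    by_cases hv : v = r
    · exact ⟨s(r, r), fun h => absurd hv h⟩
    · obtain ⟨p, hp⟩ := (hc.preconnected v r).exists_walk_length_eq_dist
      cases p with
      | nil => exact absurd rfl hv
      | @cons _ y _ hadj q =>
        refine ⟨s(v, y), fun _ => ⟨?_, y, rfl, ?_⟩⟩
        · rw [hT, Set.Finite.mem_toFinset]
          exact hadj
        · have h1 : H.dist y r ≤ q.length := SimpleGraph.dist_le q
          have h2 : q.length + 1 = H.dist v r := by
            simpa [SimpleGraph.Walk.length_cons] using hp
          omega
  choose f hf using key
  have hinj : Set.InjOn f ↑(Finset.univ.erase r) := by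
    intro a ha b hb hab
    simp only [Finset.coe_erase, Set.mem_diff, Finset.coe_univ] at ha hb
    have ha' : a ≠ r := by simpa using ha.2
    have hb' : b ≠ r := by simpa using hb.2
    obtain ⟨-, ya, hya, hda⟩ := hf a ha'
    obtain ⟨-, yb, hyb, hdb⟩ := hf b hb'
    rw [hya, hyb] at hab
    rcases Sym2.eq_iff.1 hab with ⟨h1, _⟩ | ⟨h1, h2⟩
    · exact h1
    · subst h1; subst h2
      omega
  have hmaps : ∀ v ∈ Finset.univ.erase r, f v ∈ T := by
    intro v hv
    exact (hf v (Finset.ne_of_mem_erase hv)).1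
  have := Finset.card_le_card_of_injOn f hmaps hinj
  have hcr : (Finset.univ.erase r).card = Fintype.card α - 1 := by
    rw [Finset.card_erase_of_mem (Finset.mem_univ r), Finset.card_univ]
  have hpos : 1 ≤ Fintype.card α := Fintype.card_pos_iff.2 ⟨r⟩
  omega

lemma base_edges {G : SimpleGraph V} {X : Set V} (hX : X.Finite)
    (hconn : (G.induce X).Connected) :
    ∃ E₀ : Finset (Sym2 V), EdgesOK G hX.toFinset E₀ ∧ hX.toFinset.card ≤ E₀.card + 1 := by
  classical
  haveI := hX.fintype
  have hcount := conn_card_le (G.induce X) hconn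
  set T := (Set.toFinite (G.induce X).edgeSet).toFinset with hT
  refine ⟨T.image (Sym2.map (Subtype.val : X → V)), ?_, ?_⟩
  · intro e he
    obtain ⟨e', he'T, rfl⟩ := Finset.mem_image.1 he
    rw [hT, Set.Finite.mem_toFinset] at he'T
    induction e' with
    | _ a b =>
      rw [SimpleGraph.mem_edgeSet] at he'T
      refine ⟨a, b, rfl, he'T, ?_, ?_⟩
      · rw [Set.Finite.mem_toFinset]; exact a.2
      · rw [Set.Finite.mem_toFinset]; exact b.2
  · have himg : (T.image (Sym2.map (Subtype.val : X → V))).card = T.card :=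
      Finset.card_image_of_injective _ (Sym2.map.injective Subtype.val_injective)
    have hcard : hX.toFinset.card = Fintype.card X := by
      rw [Set.Finite.card_toFinset]
    omega

def mkSubgraph (G : SimpleGraph V) (W : Finset V) (E : Finset (Sym2 V))
    (hok : EdgesOK G W E) : G.Subgraph where
  verts := ↑W
  Adj a b := s(a, b) ∈ E
  adj_sub := by
    intro a b hab
    obtain ⟨a', b', he, hadj, -, -⟩ := hok _ hab
    rcases Sym2.eq_iff.1 he.symm with ⟨rfl, rfl⟩ | ⟨rfl, rfl⟩
    · exact hadj
    · exact hadj.symm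
  edge_vert := by
    intro a b hab
    exact Finset.mem_coe.2 (edge_mem_vert hok hab).1
  symm := by
    constructor
    intro a b hab
    simpa [Sym2.eq_swap] using hab

lemma mkSubgraph_edgeSet (G : SimpleGraph V) (W : Finset V) (E : Finset (Sym2 V))
    (hok : EdgesOK G W E) : (mkSubgraph G W E hok).edgeSet = ↑E := by
  ext e
  induction e with
  | _ a b =>
    simp only [SimpleGraph.Subgraph.mem_edgeSet, Finset.mem_coe]
    rfl

end Stmt9

open Stmt9

/-- if `G[X]` is connected, `d ≥ 3` and `|C(X)| ≥ 2|X|`, then `G` has a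
subgraph `H` on at most `(2d+2)|X|` vertices with average degree at least
`2 + (d−2)/(2d+2)`. -/
theorem stmt9 {V : Type*} (G : SimpleGraph V) (d : ℕ) (hd : 3 ≤ d)
    (X : Set V) (hX : X.Finite) (hconn : (G.induce X).Connected)
    (hcrit : 2 * X.ncard ≤ (CritSet G d X).ncard ∨ (CritSet G d X).Infinite) :
    ∃ H : G.Subgraph, H.verts.Finite ∧ H.verts.Nonempty ∧
      H.verts.ncard ≤ (2 * d + 2) * X.ncard ∧
      (2 + ((d : ℚ) - 2) / (2 * d + 2)) * H.verts.ncard ≤ 2 * H.edgeSet.ncard := by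
  classical
  have hXne : X.Nonempty := by
    obtain ⟨⟨x, hx⟩⟩ := hconn.nonempty
    exact ⟨x, hx⟩
  set Xf := hX.toFinset with hXf
  have hXfcard : Xf.card = X.ncard := (Set.ncard_eq_toFinset_card X hX).symm
  have hXcoe : (↑Xf : Set V) = X := hX.coe_toFinset
  have hXfne : Xf.Nonempty := by
    obtain ⟨x, hx⟩ := hXne
    exact ⟨x, by rw [hXf, Set.Finite.mem_toFinset]; exact hx⟩
  obtain ⟨E₀, hE₀ok, hE₀card⟩ := base_edges hX hconn
  have hstep : ∀ S : Finset V, Xf ⊆ S → S.card < 2 * Xf.card →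
      ∃ v, v ∉ S ∧ CritRule G d ↑S v := by
    intro S hXfS hc
    apply exists_crit hcrit S
    · rw [← hXcoe]
      exact_mod_cast hXfS
    · omega
  obtain ⟨S, W, E, hXS, hSW, hSc, hWc, hok, hdeg, hInv⟩ :=
    buildup hd Xf hstep E₀ hE₀ok hE₀card Xf.card (le_refl _)
  have hk1 : 1 ≤ Xf.card := Finset.card_pos.2 hXfne
  have hPhi := Phi_nonneg hdeg
  have hdint : (3:ℤ) ≤ (d:ℤ) := by exact_mod_cast hd
  have hkey : (5*(d:ℤ)+2) * (W.card:ℤ) ≤ (4*(d:ℤ)+4) * (E.card:ℤ) := by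
    rw [if_neg (by omega : ¬ Xf.card = 0)] at hInv
    unfold Qf at hInv
    have hring : ((d:ℤ)-2) * ((2*(d:ℤ)+1)*(Xf.card:ℤ) + (Xf.card:ℤ))
        = (2*(d:ℤ)+2) * ((d:ℤ)-2) * (Xf.card:ℤ) := by ring
    rw [hring] at hInv
    nlinarith [hInv, hPhi, hdint]
  refine ⟨mkSubgraph G W E hok, Finset.finite_toSet W, ?_, ?_, ?_⟩
  · obtain ⟨x, hx⟩ := hXfne
    exact ⟨x, Finset.mem_coe.2 (hSW (hXS hx))⟩
  · have hv : (mkSubgraph G W E hok).verts.ncard = W.card := Set.ncard_coe_finset W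
    rw [hv, ← hXfcard]
    have : Xf.card + (2*d+1)*Xf.card = (2*d+2)*Xf.card := by ring
    omega
  · have hv : (mkSubgraph G W E hok).verts.ncard = W.card := Set.ncard_coe_finset W
    have he : (mkSubgraph G W E hok).edgeSet.ncard = E.card := by
      rw [mkSubgraph_edgeSet]
      exact Set.ncard_coe_finset E
    rw [hv, he]
    have h2d : (0:ℚ) < 2*(d:ℚ)+2 := by positivity
    have hkeyQ : (5*(d:ℚ)+2) * (W.card:ℚ) ≤ (4*(d:ℚ)+4) * (E.card:ℚ) := by
      exact_mod_cast hkey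
    have expand : (2 + ((d:ℚ) - 2) / (2 * (d:ℚ) + 2)) = (5*(d:ℚ)+2)/(2*(d:ℚ)+2) := by
      field_simp
      ring
    rw [expand, div_mul_eq_mul_div, div_le_iff₀ h2d]
    nlinarith [hkeyQ]
end
end

section
/- Let X be a finite vertex set in a graph G and suppose the d-critical set C(X) of X is infinite. Then there exist finite subgraphs H_i of G whose average degree tends to at least 3d/(2d+1). -/
namespace Stmt10Aux

variable {V : Type*} {G : SimpleGraph V} {d : ℕ}

lemma near2_mono {v u : V} {S T : Set V} (h : S ⊆ T) (hn : Near2 G v S u) :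
    Near2 G v T u := by
  rcases hn with h1 | ⟨x, hx, hxv, hadj⟩ | ⟨x, hx, w, hxv, hwv, h1, h2⟩
  · exact Or.inl (h h1)
  · exact Or.inr (Or.inl ⟨x, h hx, hxv, hadj⟩)
  · exact Or.inr (Or.inr ⟨x, h hx, w, hxv, hwv, h1, h2⟩)

lemma critRule_mono {v : V} {S T : Set V} (h : S ⊆ T) (hc : CritRule G d S v) :
    CritRule G d T v := by
  obtain ⟨F, hF, hall⟩ := hc
  exact ⟨F, hF, fun u hu => ⟨(hall u hu).1, near2_mono h (hall u hu).2⟩⟩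

/-- Finite sets buildable from `X` by adding elements of `X` or rule-critical vertices. -/
inductive Build (G : SimpleGraph V) (d : ℕ) (X : Set V) : Set V → Prop
  | empty : Build G d X ∅
  | step {S : Set V} {v : V} : Build G d X S → (v ∈ X ∨ CritRule G d S v) →
      Build G d X (insert v S)

lemma Build.finite {X S : Set V} (hb : Build G d X S) : S.Finite := by
  induction hb with
  | empty => exact Set.finite_empty
  | step _ _ ih => exact ih.insert _

lemma Build.union {X S T : Set V} (hS : Build G d X S) (hT : Build G d X T) :
    Build G d X (S ∪ T) := by
  induction hT with
  | empty => simpa using hS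
  | step hb hv ih =>
      rw [Set.union_insert]
      exact Build.step ih (hv.imp id (critRule_mono Set.subset_union_right))

/-- The union of all buildable sets. -/
def BuildU (G : SimpleGraph V) (d : ℕ) (X : Set V) : Set V :=
  {v | ∃ S, Build G d X S ∧ v ∈ S}

lemma X_subset_buildU (X : Set V) : X ⊆ BuildU G d X := by
  intro x hx
  exact ⟨insert x ∅, Build.step Build.empty (Or.inl hx), Set.mem_insert _ _⟩

lemma buildU_closed (X : Set V) : ∀ v, CritRule G d (BuildU G d X) v → v ∈ BuildU G d X := by
  classical
  intro v hc
  obtain ⟨F, hdF, hall⟩ := hc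
  -- find one buildable set witnessing Near2 for all u ∈ F
  have key : ∀ F' : Finset V, (∀ u ∈ F', Near2 G v (BuildU G d X) u) →
      ∃ T, Build G d X T ∧ ∀ u ∈ F', Near2 G v T u := by
    intro F'
    induction F' using Finset.induction_on with
    | empty => exact fun _ => ⟨∅, Build.empty, by simp⟩
    | insert _ _ hnotmem =>
        rename_i u F'' ih
        intro hall'
        obtain ⟨T₁, hT₁, hN₁⟩ := ih (fun z hz => hall' z (Finset.mem_insert_of_mem hz))
        have hu : Near2 G v (BuildU G d X) u := hall' u (Finset.mem_insert_self _ _)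
        have : ∃ T₂, Build G d X T₂ ∧ Near2 G v T₂ u := by
          rcases hu with h1 | ⟨x, ⟨Sx, hSx, hxSx⟩, hxv, hadj⟩ |
              ⟨x, ⟨Sx, hSx, hxSx⟩, w, hxv, hwv, h1, h2⟩
          · obtain ⟨Su, hSu, huSu⟩ := h1
            exact ⟨Su, hSu, Or.inl huSu⟩
          · exact ⟨Sx, hSx, Or.inr (Or.inl ⟨x, hxSx, hxv, hadj⟩)⟩
          · exact ⟨Sx, hSx, Or.inr (Or.inr ⟨x, hxSx, w, hxv, hwv, h1, h2⟩)⟩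
        obtain ⟨T₂, hT₂, hN₂⟩ := this
        refine ⟨T₁ ∪ T₂, hT₁.union hT₂, ?_⟩
        intro z hz
        rcases Finset.mem_insert.mp hz with rfl | hz
        · exact near2_mono Set.subset_union_right hN₂
        · exact near2_mono Set.subset_union_left (hN₁ z hz)
  obtain ⟨T, hT, hN⟩ := key F (fun u hu => (hall u hu).2)
  refine ⟨insert v T, Build.step hT (Or.inr ⟨F, hdF, fun u hu => ⟨(hall u hu).1, hN u hu⟩⟩),
    Set.mem_insert _ _⟩

lemma critSet_subset_buildU (X : Set V) : CritSet G d X ⊆ BuildU G d X :=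
  Set.sInter_subset_of_mem ⟨X_subset_buildU X, buildU_closed X⟩

lemma exists_build_card (X : Set V) (hU : (BuildU G d X).Infinite) (n : ℕ) :
    ∃ S : Set V, Build G d X S ∧ n ≤ S.ncard := by
  induction n with
  | zero => exact ⟨∅, Build.empty, Nat.zero_le _⟩
  | succ n ih =>
      obtain ⟨S, hS, hn⟩ := ih
      have hnotsub : ¬ BuildU G d X ⊆ S := fun h => hU (hS.finite.subset h)
      obtain ⟨u, huU, huS⟩ := Set.not_subset.mp hnotsub
      obtain ⟨Su, hSu, huSu⟩ := huU
      refine ⟨S ∪ Su, hS.union hSu, ?_⟩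
      have hss : S ⊂ S ∪ Su :=
        ⟨Set.subset_union_left, fun h => huS (h (Set.mem_union_right _ huSu))⟩
      have := Set.ncard_lt_ncard hss (hS.finite.union hSu.finite)
      omega

/-- Add a new vertex `v` together with edges to each element of `F`, which must
already be vertices. -/
lemma extend (H₀ : G.Subgraph) (v : V) (F : Finset V)
    (hfv : H₀.verts.Finite) (hfe : H₀.edgeSet.Finite) (hv : v ∉ H₀.verts)
    (hF : ∀ u ∈ F, G.Adj v u ∧ u ∈ H₀.verts) :
    ∃ H : G.Subgraph, H₀ ≤ H ∧ H.verts = insert v H₀.verts ∧ H.edgeSet.Finite ∧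
      H.edgeSet.ncard = H₀.edgeSet.ncard + F.card := by
  classical
  let H : G.Subgraph :=
    { verts := insert v H₀.verts,
      Adj := fun a b => H₀.Adj a b ∨ (a = v ∧ b ∈ F) ∨ (b = v ∧ a ∈ F),
      adj_sub := by
        rintro a b (h | ⟨rfl, hb⟩ | ⟨rfl, ha⟩)
        · exact H₀.adj_sub h
        · exact (hF b hb).1
        · exact ((hF a ha).1).symm
      edge_vert := by
        rintro a b (h | ⟨rfl, hb⟩ | ⟨rfl, ha⟩)
        · exact Set.mem_insert_of_mem _ (H₀.edge_vert h)
        · exact Set.mem_insert _ _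
        · exact Set.mem_insert_of_mem _ (hF a ha).2
      symm := by
        constructor
        rintro a b (h | ⟨rfl, hb⟩ | ⟨rfl, ha⟩)
        · exact Or.inl h.symm
        · exact Or.inr (Or.inr ⟨rfl, hb⟩)
        · exact Or.inr (Or.inl ⟨rfl, ha⟩) }
  have hedge : H.edgeSet = H₀.edgeSet ∪ (fun u => s(v, u)) '' ↑F := by
    ext e
    induction e using Sym2.ind with
    | _ a b =>
      simp only [SimpleGraph.Subgraph.mem_edgeSet, Set.mem_union, Set.mem_image,
        Finset.mem_coe]
      show (H₀.Adj a b ∨ (a = v ∧ b ∈ F) ∨ (b = v ∧ a ∈ F)) ↔ _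
      constructor
      · rintro (h | ⟨rfl, hb⟩ | ⟨rfl, ha⟩)
        · exact Or.inl h
        · exact Or.inr ⟨b, hb, rfl⟩
        · exact Or.inr ⟨a, ha, Sym2.eq_swap⟩
      · rintro (h | ⟨u, hu, he⟩)
        · exact Or.inl h
        · rcases Sym2.eq_iff.mp he with ⟨rfl, rfl⟩ | ⟨rfl, rfl⟩
          · exact Or.inr (Or.inl ⟨rfl, hu⟩)
          · exact Or.inr (Or.inr ⟨rfl, hu⟩)
  have hdisj : Disjoint H₀.edgeSet ((fun u => s(v, u)) '' ↑F) := by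
    rw [Set.disjoint_right]
    rintro e ⟨u, hu, rfl⟩ he
    exact hv (H₀.edge_vert (SimpleGraph.Subgraph.mem_edgeSet.mp he))
  have himg : ((fun u => s(v, u)) '' ↑F).ncard = F.card := by
    rw [Set.ncard_image_of_injOn, Set.ncard_coe_finset]
    intro a ha b hb hab
    rcases Sym2.eq_iff.mp hab with ⟨-, h⟩ | ⟨h1, h2⟩
    · exact h
    · exact absurd h2.symm ((hF a (Finset.mem_coe.mp ha)).1.ne)
  refine ⟨H, ⟨Set.subset_insert _ _, fun _ _ h => Or.inl h⟩, rfl, ?_, ?_⟩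
  · rw [hedge]; exact hfe.union ((F.finite_toSet).image _)
  · rw [hedge, Set.ncard_union_eq hdisj hfe ((F.finite_toSet).image _), himg]

/-- Bring one witness vertex `u` (with its path to `S`) into the subgraph,
adding `a ≤ 2` vertices and the same number of new edges. -/
lemma step_u (S : Set V) (H₀ : G.Subgraph) (v u : V)
    (hfv : H₀.verts.Finite) (hfe : H₀.edgeSet.Finite) (hS : S ⊆ H₀.verts)
    (hv : v ∉ H₀.verts) (hadj : G.Adj v u) (hn : Near2 G v S u) :
    ∃ H : G.Subgraph, ∃ a : ℕ, H₀ ≤ H ∧ H.verts.Finite ∧ H.edgeSet.Finite ∧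
      v ∉ H.verts ∧ u ∈ H.verts ∧ H.verts.ncard = H₀.verts.ncard + a ∧ a ≤ 2 ∧
      H.edgeSet.ncard = H₀.edgeSet.ncard + a := by
  classical
  by_cases hu : u ∈ H₀.verts
  · exact ⟨H₀, 0, le_refl _, hfv, hfe, hv, hu, by simp, by omega, by simp⟩
  rcases hn with h1 | ⟨x, hx, hxv, huX⟩ | ⟨x, hx, w, hxv, hwv, huw, hwx⟩
  · exact absurd (hS h1) hu
  · obtain ⟨H, hle, hverts, hEfin, hE⟩ := extend H₀ u {x} hfv hfe hu
      (by intro z hz; rw [Finset.mem_singleton] at hz; subst hz; exact ⟨huX, hS hx⟩)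
    refine ⟨H, 1, hle, ?_, hEfin, ?_, ?_, ?_, by omega, by simpa using hE⟩
    · rw [hverts]; exact hfv.insert _
    · rw [hverts]; rintro (rfl | h); exact hadj.ne rfl; exact hv h
    · rw [hverts]; exact Set.mem_insert _ _
    · rw [hverts, Set.ncard_insert_of_notMem hu hfv]
  · by_cases hw : w ∈ H₀.verts
    · obtain ⟨H, hle, hverts, hEfin, hE⟩ := extend H₀ u {w} hfv hfe hu
        (by intro z hz; rw [Finset.mem_singleton] at hz; subst hz; exact ⟨huw, hw⟩)
      refine ⟨H, 1, hle, ?_, hEfin, ?_, ?_, ?_, by omega, by simpa using hE⟩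
      · rw [hverts]; exact hfv.insert _
      · rw [hverts]; rintro (rfl | h); exact hadj.ne rfl; exact hv h
      · rw [hverts]; exact Set.mem_insert _ _
      · rw [hverts, Set.ncard_insert_of_notMem hu hfv]
    · obtain ⟨H₁, hle₁, hverts₁, hEfin₁, hE₁⟩ := extend H₀ w {x} hfv hfe hw
        (by intro z hz; rw [Finset.mem_singleton] at hz; subst hz; exact ⟨hwx, hS hx⟩)
      have hfv₁ : H₁.verts.Finite := by rw [hverts₁]; exact hfv.insert _
      have hu₁ : u ∉ H₁.verts := by
        rw [hverts₁]; rintro (rfl | h); exact huw.ne rfl; exact hu h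
      obtain ⟨H₂, hle₂, hverts₂, hEfin₂, hE₂⟩ := extend H₁ u {w} hfv₁ hEfin₁ hu₁
        (by intro z hz; rw [Finset.mem_singleton] at hz; subst hz
            exact ⟨huw, by rw [hverts₁]; exact Set.mem_insert _ _⟩)
      refine ⟨H₂, 2, le_trans hle₁ hle₂, ?_, hEfin₂, ?_, ?_, ?_, by omega, ?_⟩
      · rw [hverts₂]; exact hfv₁.insert _
      · rw [hverts₂, hverts₁]
        rintro (rfl | rfl | h)
        · exact hadj.ne rfl
        · exact hwv rfl
        · exact hv h
      · rw [hverts₂]; exact Set.mem_insert _ _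
      · rw [hverts₂, Set.ncard_insert_of_notMem hu₁ hfv₁, hverts₁,
          Set.ncard_insert_of_notMem hw hfv]
      · rw [hE₂, hE₁]; simp

/-- Bring all witness vertices of `F'` into the subgraph. -/
lemma inner (S : Set V) (H₀ : G.Subgraph) (v : V) (F' : Finset V)
    (hfv : H₀.verts.Finite) (hfe : H₀.edgeSet.Finite) (hS : S ⊆ H₀.verts)
    (hv : v ∉ H₀.verts) (hF : ∀ u ∈ F', G.Adj v u ∧ Near2 G v S u) :
    ∃ H : G.Subgraph, ∃ a : ℕ, H₀ ≤ H ∧ H.verts.Finite ∧ H.edgeSet.Finite ∧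
      v ∉ H.verts ∧ (∀ u ∈ F', u ∈ H.verts) ∧ H.verts.ncard = H₀.verts.ncard + a ∧
      a ≤ 2 * F'.card ∧ H.edgeSet.ncard = H₀.edgeSet.ncard + a := by
  classical
  induction F' using Finset.induction_on with
  | empty =>
      exact ⟨H₀, 0, le_refl _, hfv, hfe, hv, by simp, by simp, by omega, by simp⟩
  | insert _ _ hnotmem =>
      rename_i u F'' ih
      obtain ⟨H₁, a₁, hle₁, hfv₁, hfe₁, hv₁, hmem₁, hn₁, ha₁, he₁⟩ :=
        ih (fun z hz => hF z (Finset.mem_insert_of_mem hz))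
      have hS₁ : S ⊆ H₁.verts := hS.trans hle₁.1
      obtain ⟨hu1, hu2⟩ := hF u (Finset.mem_insert_self _ _)
      obtain ⟨H₂, a₂, hle₂, hfv₂, hfe₂, hv₂, humem, hn₂, ha₂, he₂⟩ :=
        step_u S H₁ v u hfv₁ hfe₁ hS₁ hv₁ hu1 hu2
      refine ⟨H₂, a₁ + a₂, le_trans hle₁ hle₂, hfv₂, hfe₂, hv₂, ?_, ?_, ?_, ?_⟩
      · intro z hz
        rcases Finset.mem_insert.mp hz with rfl | hz
        · exact humem
        · exact hle₂.1 (hmem₁ z hz)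
      · omega
      · rw [Finset.card_insert_of_notMem hnotmem]; omega
      · omega

lemma build_X (X : Set V) (hX : X.Finite) : Build G d X X :=
  Set.Finite.induction_on_subset (motive := fun s _ => Build G d X s) X hX Build.empty
    (fun haX _ _ ih => Build.step ih (Or.inl haX))

/-- The main counting lemma: every buildable set extends to a finite subgraph whose
edge count is at least `3d/(2d+1)` times the number of non-`X` vertices. -/
lemma main (hd : 1 ≤ d) (X : Set V) (hX : X.Finite) {S : Set V}
    (hb : Build G d X S) :
    ∃ H : G.Subgraph, H.verts.Finite ∧ H.edgeSet.Finite ∧ S ∪ X ⊆ H.verts ∧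
      (3 * (d : ℚ) / (2 * d + 1)) * ((H.verts \ X).ncard : ℚ) ≤ (H.edgeSet.ncard : ℚ) := by
  classical
  induction hb with
  | empty =>
      refine ⟨⟨X, fun _ _ => False, False.elim, False.elim, ⟨fun _ _ h => h⟩⟩,
        hX, ?_, by simp, ?_⟩
      all_goals {
        have he : (⟨X, fun _ _ => False, False.elim, False.elim, ⟨fun _ _ h => h⟩⟩ :
            G.Subgraph).edgeSet = ∅ := by
          ext e
          induction e using Sym2.ind with
          | _ a b =>
            constructor
            · intro h; exact False.elim (SimpleGraph.Subgraph.mem_edgeSet.mp h)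
            · intro h; exact absurd h (Set.notMem_empty _)
        first
        | (rw [he]; exact Set.finite_empty)
        | (rw [he]; simp)
      }
  | step hb hv ih =>
      rename_i S v
      obtain ⟨H₀, hfv, hfe, hsub, hineq⟩ := ih
      by_cases hvH : v ∈ H₀.verts
      · refine ⟨H₀, hfv, hfe, ?_, hineq⟩
        intro z hz
        rcases hz with hz | hz
        · rcases Set.mem_insert_iff.mp hz with rfl | hz
          · exact hvH
          · exact hsub (Or.inl hz)
        · exact hsub (Or.inr hz)
      · have hrule : CritRule G d S v := by
          rcases hv with hX' | hr
          · exact absurd (hsub (Or.inr hX')) hvH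
          · exact hr
        obtain ⟨F, hdF, hall⟩ := hrule
        obtain ⟨F', hF'sub, hF'card⟩ := Finset.exists_subset_card_eq hdF
        have hallF' : ∀ u ∈ F', G.Adj v u ∧ Near2 G v S u := fun u hu => hall u (hF'sub hu)
        have hSsub : S ⊆ H₀.verts := fun z hz => hsub (Or.inl hz)
        obtain ⟨H₁, a, hle₁, hfv₁, hfe₁, hv₁, hmem, hncard, ha, hE₁⟩ :=
          inner S H₀ v F' hfv hfe hSsub hvH hallF'
        rw [hF'card] at ha
        obtain ⟨H₂, hle₂, hverts₂, hfe₂, hE₂⟩ := extend H₁ v F' hfv₁ hfe₁ hv₁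
          (fun u hu => ⟨(hallF' u hu).1, hmem u hu⟩)
        have hfv₂ : H₂.verts.Finite := by rw [hverts₂]; exact hfv₁.insert _
        have hsub02 : H₀.verts ⊆ H₂.verts := hle₁.1.trans hle₂.1
        refine ⟨H₂, hfv₂, hfe₂, ?_, ?_⟩
        · intro z hz
          rcases hz with hz | hz
          · rcases Set.mem_insert_iff.mp hz with rfl | hz
            · rw [hverts₂]; exact Set.mem_insert _ _
            · exact hsub02 (hsub (Or.inl hz))
          · exact hsub02 (hsub (Or.inr hz))
        · have hcard₂ : H₂.verts.ncard = H₀.verts.ncard + (a + 1) := by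
            rw [hverts₂, Set.ncard_insert_of_notMem hv₁ hfv₁, hncard]; omega
          have hEcard : H₂.edgeSet.ncard = H₀.edgeSet.ncard + (a + d) := by
            rw [hE₂, hE₁, hF'card]; omega
          have hdiffcard : (H₂.verts \ H₀.verts).ncard = a + 1 := by
            rw [Set.ncard_diff hsub02 hfv, hcard₂]; omega
          have hXbound : (H₂.verts \ X).ncard ≤ (H₀.verts \ X).ncard + (a + 1) := by
            have hsplit : H₂.verts \ X ⊆ (H₀.verts \ X) ∪ (H₂.verts \ H₀.verts) := by
              intro z hz
              by_cases h : z ∈ H₀.verts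
              · exact Or.inl ⟨h, hz.2⟩
              · exact Or.inr ⟨hz.1, h⟩
            calc (H₂.verts \ X).ncard
                ≤ ((H₀.verts \ X) ∪ (H₂.verts \ H₀.verts)).ncard :=
                  Set.ncard_le_ncard hsplit (hfv.diff.union hfv₂.diff)
              _ ≤ (H₀.verts \ X).ncard + (H₂.verts \ H₀.verts).ncard :=
                  Set.ncard_union_le _ _
              _ = (H₀.verts \ X).ncard + (a + 1) := by rw [hdiffcard]
          have hpos : (0 : ℚ) < 2 * (d : ℚ) + 1 := by positivity
          have hc0 : (0 : ℚ) ≤ 3 * (d : ℚ) / (2 * d + 1) := by positivity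
          have key : 3 * (d : ℚ) / (2 * d + 1) * ((a : ℚ) + 1) ≤ (a : ℚ) + d := by
            rw [div_mul_eq_mul_div, div_le_iff₀ hpos]
            have ha' : (a : ℚ) ≤ 2 * d := by exact_mod_cast ha
            have hd' : (1 : ℚ) ≤ d := by exact_mod_cast hd
            nlinarith
          have h1 : ((H₂.verts \ X).ncard : ℚ) ≤ ((H₀.verts \ X).ncard : ℚ) + ((a : ℚ) + 1) := by
            exact_mod_cast hXbound
          have h2 : (H₂.edgeSet.ncard : ℚ) = (H₀.edgeSet.ncard : ℚ) + ((a : ℚ) + d) := by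
            exact_mod_cast hEcard
          have h3 := mul_le_mul_of_nonneg_left h1 hc0
          nlinarith [hineq, key, h3]

end Stmt10Aux

/-- if `X` is a finite vertex set of a countable graph `G` whose
`d`-critical set is infinite, then for every `ε > 0` there is a finite subgraph of `G`
with average degree at least `3d/(2d+1) − ε`. -/
theorem stmt10 {V : Type*} [Countable V] (G : SimpleGraph V) (d : ℕ) (hd : 1 ≤ d)
    (X : Set V) (hX : X.Finite) (hinf : (CritSet G d X).Infinite) :
    ∀ ε : ℚ, 0 < ε → ∃ H : G.Subgraph, H.verts.Finite ∧ H.verts.Nonempty ∧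
      (3 * (d : ℚ) / (2 * d + 1) - ε) * H.verts.ncard ≤ 2 * H.edgeSet.ncard := by
  classical
  intro ε hε
  have hU : (Stmt10Aux.BuildU G d X).Infinite :=
    hinf.mono (Stmt10Aux.critSet_subset_buildU X)
  obtain ⟨N₀, hN₀⟩ := exists_nat_ge ((3 * (X.ncard : ℚ)) / ε)
  set N : ℕ := N₀ + 1 with hNdef
  obtain ⟨S, hS, hcard⟩ := Stmt10Aux.exists_build_card X hU N
  have hS' : Stmt10Aux.Build G d X (S ∪ X) := hS.union (Stmt10Aux.build_X X hX)
  obtain ⟨H, hfv, hfe, hsub, hineq⟩ := Stmt10Aux.main hd X hX hS'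
  have hSsub : S ⊆ H.verts := fun z hz => hsub (Or.inl (Or.inl hz))
  have hSne : S.Nonempty := by
    rw [Set.nonempty_iff_ne_empty]
    intro h
    rw [h, Set.ncard_empty] at hcard
    omega
  refine ⟨H, hfv, ⟨hSne.choose, hSsub hSne.choose_spec⟩, ?_⟩
  -- notation
  set c : ℚ := 3 * (d : ℚ) / (2 * d + 1) with hc
  have hpos : (0 : ℚ) < 2 * (d : ℚ) + 1 := by positivity
  have hc0 : (0 : ℚ) ≤ c := by positivity
  have hc32 : c ≤ 3 / 2 := by
    rw [hc, div_le_iff₀ hpos]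
    have : (0 : ℚ) ≤ (d : ℚ) := by positivity
    linarith
  have hNn : (N : ℚ) ≤ (H.verts.ncard : ℚ) := by
    have h1 : N ≤ S.ncard := hcard
    have h2 : S.ncard ≤ H.verts.ncard := Set.ncard_le_ncard hSsub hfv
    exact_mod_cast le_trans h1 h2
  have hkbound : (H.verts.ncard : ℚ) ≤ ((H.verts \ X).ncard : ℚ) + (X.ncard : ℚ) := by
    have hsplit : H.verts ⊆ (H.verts \ X) ∪ X := by
      intro z hz
      by_cases h : z ∈ X
      · exact Or.inr h
      · exact Or.inl ⟨hz, h⟩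
    have := le_trans (Set.ncard_le_ncard hsplit (hfv.diff.union hX))
      (Set.ncard_union_le _ _)
    exact_mod_cast this
  have hεN : 3 * (X.ncard : ℚ) ≤ ε * N := by
    have h1 : 3 * (X.ncard : ℚ) ≤ N₀ * ε := (div_le_iff₀ hε).mp hN₀
    have h2 : (N₀ : ℚ) * ε ≤ ε * N := by
      rw [hNdef]; push_cast; nlinarith
    linarith
  -- main chain
  have hm0 : (0 : ℚ) ≤ ((H.verts \ X).ncard : ℚ) := by positivity
  have hn0 : (0 : ℚ) ≤ (H.verts.ncard : ℚ) := by positivity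
  have hk0 : (0 : ℚ) ≤ (X.ncard : ℚ) := by positivity
  have h2 : c * ((H.verts.ncard : ℚ) - (X.ncard : ℚ)) ≤ c * ((H.verts \ X).ncard : ℚ) :=
    mul_le_mul_of_nonneg_left (by linarith) hc0
  have h3 : 2 * c * (X.ncard : ℚ) ≤ 3 * (X.ncard : ℚ) := by nlinarith
  have h4 : ε * N ≤ ε * (H.verts.ncard : ℚ) := mul_le_mul_of_nonneg_left hNn (le_of_lt hε)
  have h5 : (0 : ℚ) ≤ c * (H.verts.ncard : ℚ) := mul_nonneg hc0 hn0
  have goal : (c - ε) * (H.verts.ncard : ℚ) ≤ 2 * (H.edgeSet.ncard : ℚ) := by nlinarith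
  exact goal
end

section
/- Let d ≥ 2 be an integer and let G be the graph obtained from the infinite d/2-regular tree (d even) by replacing every edge by a complete bipartite graph K_{2,2} (i.e., blowing up each vertex into an independent set of size 2 and each edge into a K_{2,2}). Then G is d-regular and its edge Cheeger constant satisfies h(G) = d − 4, where h(G) = inf over finite vertex sets X of e(X, G∖X)/|X|. -/
/-- The number of edges with exactly one endpoint in `X`, counted as ordered pairs whose
first coordinate lies in `X` (so each crossing edge is counted exactly once). -/
noncomputable def eBoundary {V : Type*} (G : SimpleGraph V) (X : Set V) : ℕ :=
  {p : V × V | p.1 ∈ X ∧ p.2 ∉ X ∧ G.Adj p.1 p.2}.ncard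

open SimpleGraph Set

section Stmt14Aux

variable {W : Type*} {T : SimpleGraph W}

attribute [local instance 10] Classical.decEq



lemma getVert_mem_support {u v : W} (p : T.Walk u v) (i : ℕ) : p.getVert i ∈ p.support := by
  induction p generalizing i with
  | nil => cases i <;> simp [SimpleGraph.Walk.getVert]
  | cons h q ih =>
    cases i with
    | zero => simp [SimpleGraph.Walk.getVert_zero]
    | succ n =>
      rw [SimpleGraph.Walk.getVert_cons_succ]
      simp only [SimpleGraph.Walk.support_cons, List.mem_cons]
      exact Or.inr (ih n)

lemma IsPath.getVert_inj {u v : W} {p : T.Walk u v} (hp : p.IsPath) {i j : ℕ}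
    (hi : i ≤ p.length) (hj : j ≤ p.length) (h : p.getVert i = p.getVert j) : i = j := by
  induction p generalizing i j with
  | nil => simp only [SimpleGraph.Walk.length_nil, Nat.le_zero] at hi hj; omega
  | cons hadj q ih =>
    rw [SimpleGraph.Walk.cons_isPath_iff] at hp
    cases i with
    | zero =>
      cases j with
      | zero => rfl
      | succ m =>
        exfalso
        rw [SimpleGraph.Walk.getVert_zero, SimpleGraph.Walk.getVert_cons_succ] at h
        exact hp.2 (h ▸ getVert_mem_support q m)
    | succ n =>
      cases j with
      | zero =>
        exfalso
        rw [SimpleGraph.Walk.getVert_zero, SimpleGraph.Walk.getVert_cons_succ] at h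
        exact hp.2 (h ▸ getVert_mem_support q n)
      | succ m =>
        rw [SimpleGraph.Walk.getVert_cons_succ, SimpleGraph.Walk.getVert_cons_succ] at h
        simp only [SimpleGraph.Walk.length_cons] at hi hj
        exact congrArg Nat.succ (ih hp.1 (by omega) (by omega) h)

lemma dist_le_succ_of_adj (hconn : T.Connected) {r u v : W} (h : T.Adj u v) :
    T.dist r v ≤ T.dist r u + 1 := by
  have h1 : T.dist u v ≤ 1 := by
    simpa using SimpleGraph.dist_le (SimpleGraph.Walk.cons h SimpleGraph.Walk.nil)
  have := hconn.dist_triangle (u := r) (v := u) (w := v)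
  omega


lemma adj_dist_ne (hconn : T.Connected) (hac : T.IsAcyclic) {r u v : W} (h : T.Adj u v) :
    T.dist r u ≠ T.dist r v := by
  intro heq
  obtain ⟨p, hp, hplen⟩ := hconn.exists_path_of_dist r u
  have hvs : v ∉ p.support := by
    intro hvs
    have h1 : T.dist r v ≤ (p.takeUntil v hvs).length := SimpleGraph.dist_le _
    have h2 : (p.takeUntil v hvs).length + (p.dropUntil v hvs).length = p.length := by
      rw [← SimpleGraph.Walk.length_append, p.take_spec hvs]
    have h3 : (p.dropUntil v hvs).length = 0 := by omega
    exact h.ne' (SimpleGraph.Walk.eq_of_length_eq_zero h3)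
  have hp' : (p.concat h).IsPath := by
    rw [← SimpleGraph.Walk.isPath_reverse_iff, SimpleGraph.Walk.reverse_concat,
      SimpleGraph.Walk.cons_isPath_iff]
    refine ⟨(SimpleGraph.Walk.isPath_reverse_iff p).2 hp, ?_⟩
    rwa [SimpleGraph.Walk.support_reverse, List.mem_reverse]
  obtain ⟨q, hq, hqlen⟩ := hconn.exists_path_of_dist r v
  have := SimpleGraph.isAcyclic_iff_path_unique.mp hac ⟨p.concat h, hp'⟩ ⟨q, hq⟩
  have hl := congrArg (fun (x : T.Path r v) => x.val.length) this
  simp only [SimpleGraph.Walk.length_concat] at hl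
  omega

lemma parent_unique (hconn : T.Connected) (hac : T.IsAcyclic) {r u u' v : W}
    (h : T.Adj u v) (h' : T.Adj u' v) (hlt : T.dist r u < T.dist r v)
    (hlt' : T.dist r u' < T.dist r v) : u = u' := by
  have he : T.dist r v = T.dist r u + 1 :=
    le_antisymm (dist_le_succ_of_adj hconn h) hlt
  have he' : T.dist r v = T.dist r u' + 1 :=
    le_antisymm (dist_le_succ_of_adj hconn h') hlt'
  obtain ⟨p, hp, hplen⟩ := hconn.exists_path_of_dist r u
  obtain ⟨p', hp', hplen'⟩ := hconn.exists_path_of_dist r u'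
  have hvs : v ∉ p.support := by
    intro hvs
    have h1 : T.dist r v ≤ (p.takeUntil v hvs).length := SimpleGraph.dist_le _
    have h2 := SimpleGraph.Walk.length_takeUntil_le p hvs
    omega
  have hvs' : v ∉ p'.support := by
    intro hvs
    have h1 : T.dist r v ≤ (p'.takeUntil v hvs).length := SimpleGraph.dist_le _
    have h2 := SimpleGraph.Walk.length_takeUntil_le p' hvs
    omega
  have hc : (p.concat h).IsPath := by
    rw [← SimpleGraph.Walk.isPath_reverse_iff, SimpleGraph.Walk.reverse_concat,
      SimpleGraph.Walk.cons_isPath_iff]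
    exact ⟨(SimpleGraph.Walk.isPath_reverse_iff p).2 hp, by
      rwa [SimpleGraph.Walk.support_reverse, List.mem_reverse]⟩
  have hc' : (p'.concat h').IsPath := by
    rw [← SimpleGraph.Walk.isPath_reverse_iff, SimpleGraph.Walk.reverse_concat,
      SimpleGraph.Walk.cons_isPath_iff]
    exact ⟨(SimpleGraph.Walk.isPath_reverse_iff p').2 hp', by
      rwa [SimpleGraph.Walk.support_reverse, List.mem_reverse]⟩
  have := SimpleGraph.isAcyclic_iff_path_unique.mp hac ⟨p.concat h, hc⟩ ⟨p'.concat h', hc'⟩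
  have hw : p.concat h = p'.concat h' := congrArg Subtype.val this
  obtain ⟨hv, -⟩ := SimpleGraph.Walk.concat_inj hw
  exact hv

lemma exists_parent (hconn : T.Connected) {r v : W} {m : ℕ} (hd : T.dist r v = m + 1) :
    ∃ w, T.Adj w v ∧ T.dist r w = m := by
  obtain ⟨p, hp, hplen⟩ := hconn.exists_path_of_dist r v
  have hnil : ¬ p.reverse.Nil := by
    rw [SimpleGraph.Walk.not_nil_iff_lt_length, SimpleGraph.Walk.length_reverse]
    omega
  obtain ⟨w, hadj, q, hq⟩ := SimpleGraph.Walk.not_nil_iff.mp hnil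
  have hql : q.length = m := by
    have := congrArg SimpleGraph.Walk.length hq
    simp only [SimpleGraph.Walk.length_reverse, SimpleGraph.Walk.length_cons] at this
    omega
  refine ⟨w, hadj.symm, le_antisymm (hql ▸ (SimpleGraph.dist_comm (u:=r) (v:=w) ▸ SimpleGraph.dist_le q)) ?_⟩
  have := dist_le_succ_of_adj hconn (r := r) hadj.symm
  omega


lemma ball_finite (hconn : T.Connected) (hfin : ∀ v, (T.neighborSet v).Finite) (r : W) :
    ∀ n : ℕ, {v | T.dist r v ≤ n}.Finite := by
  intro n
  induction n with
  | zero =>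
    refine (Set.finite_singleton r).subset ?_
    intro v hv
    simp only [Set.mem_setOf_eq, Nat.le_zero] at hv
    exact (hconn.dist_eq_zero_iff.mp hv).symm ▸ rfl
  | succ n ih =>
    refine (ih.union (ih.biUnion (fun w _ => hfin w))).subset ?_
    intro v hv
    simp only [Set.mem_setOf_eq] at hv
    rcases Nat.lt_or_ge (T.dist r v) (n + 1) with h | h
    · exact Or.inl (by simpa using Nat.lt_succ_iff.mp h)
    · have : T.dist r v = n + 1 := by omega
      obtain ⟨w, hadj, hw⟩ := exists_parent hconn this
      exact Or.inr (Set.mem_biUnion (by simpa using hw.le) hadj)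

lemma treeExistsDistEq (hconn : T.Connected) (hfin : ∀ v, (T.neighborSet v).Finite)
    (hinf : Infinite W) (r : W) : ∀ n : ℕ, ∃ v, T.dist r v = n := by
  have step : ∀ m : ℕ, (∃ v, T.dist r v = m + 1) → ∃ v, T.dist r v = m := by
    rintro m ⟨v, hv⟩
    obtain ⟨w, -, hw⟩ := exists_parent hconn hv
    exact ⟨w, hw⟩
  have down : ∀ (j i : ℕ), (∃ v, T.dist r v = i + j) → ∃ v, T.dist r v = i := by
    intro j
    induction j with
    | zero => intro i h; simpa using h
    | succ j ih => intro i h; exact ih i (step (i + j) (by rwa [← Nat.add_assoc] at h))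
  intro n
  by_contra hn
  have hball : (Set.univ : Set W) ⊆ {v | T.dist r v ≤ n} := by
    intro v _
    simp only [Set.mem_setOf_eq]
    by_contra hlt
    push_neg at hlt
    obtain ⟨j, hj⟩ : ∃ j, T.dist r v = n + j := ⟨T.dist r v - n, by omega⟩
    exact hn (down j n ⟨v, hj⟩)
  exact Set.infinite_univ (((ball_finite hconn hfin r n).subset hball))


lemma ncard_prod_univ_bool {W : Type*} (s : Set W) :
    (s ×ˢ (Set.univ : Set Bool)).ncard = 2 * s.ncard := by
  rw [← Nat.card_coe_set_eq, ← Nat.card_coe_set_eq,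
    Nat.card_congr (Equiv.Set.prod s (Set.univ : Set Bool)), Nat.card_prod]
  have : Nat.card (Set.univ : Set Bool) = 2 := by
    rw [Nat.card_congr (Equiv.Set.univ Bool), Nat.card_eq_fintype_card, Fintype.card_bool]
  rw [this, mul_comm]

lemma key_count {V : Type*} (G : SimpleGraph V) (X : Set V) (hX : X.Finite) (k2 : ℕ)
    (hfin : ∀ x, (G.neighborSet x).Finite) (hdeg : ∀ x, (G.neighborSet x).ncard = k2) :
    eBoundary G X + {p : V × V | p.1 ∈ X ∧ p.2 ∈ X ∧ G.Adj p.1 p.2}.ncard = k2 * X.ncard := by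
  classical
  set NB : Set (V × V) := {p | p.1 ∈ X ∧ G.Adj p.1 p.2} with hNB
  set XF : Finset V := hX.toFinset with hXF
  set NBF : Finset (V × V) := XF.biUnion (fun x => {x} ×ˢ (hfin x).toFinset) with hNBF
  have hNBeq : NB = ↑NBF := by
    ext ⟨a, b⟩
    simp [hNB, hNBF, Finset.mem_biUnion, Finset.mem_product, Set.Finite.mem_toFinset,
      SimpleGraph.mem_neighborSet]
    constructor
    · rintro ⟨h1, h2⟩; exact ⟨h2, hX.mem_toFinset.mpr h1⟩
    · rintro ⟨h2, h1⟩; exact ⟨hX.mem_toFinset.mp h1, h2⟩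
  have hNBfin : NB.Finite := hNBeq ▸ NBF.finite_toSet
  have hcard : NB.ncard = k2 * X.ncard := by
    rw [hNBeq, Set.ncard_coe_finset, hNBF]
    rw [Finset.card_biUnion]
    · have : ∀ x ∈ XF, ({x} ×ˢ (hfin x).toFinset).card = k2 := by
        intro x _
        rw [Finset.card_product, Finset.card_singleton, one_mul,
          ← Set.ncard_eq_toFinset_card _ (hfin x), hdeg]
      rw [Finset.sum_congr rfl this, Finset.sum_const, smul_eq_mul, hXF,
        ← Set.ncard_eq_toFinset_card _ hX, mul_comm]
    · intro x _ y _ hxy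
      simp only [Finset.disjoint_left, Finset.mem_product, Finset.mem_singleton]
      rintro ⟨a, b⟩ ⟨rfl, -⟩ ⟨rfl, -⟩
      exact hxy rfl
  have hunion : {p : V × V | p.1 ∈ X ∧ p.2 ∉ X ∧ G.Adj p.1 p.2}
      ∪ {p : V × V | p.1 ∈ X ∧ p.2 ∈ X ∧ G.Adj p.1 p.2} = NB := by
    ext ⟨a, b⟩
    simp only [Set.mem_union, Set.mem_setOf_eq, hNB]
    tauto
  have hdisj : Disjoint {p : V × V | p.1 ∈ X ∧ p.2 ∉ X ∧ G.Adj p.1 p.2}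
      {p : V × V | p.1 ∈ X ∧ p.2 ∈ X ∧ G.Adj p.1 p.2} := by
    rw [Set.disjoint_left]
    rintro ⟨a, b⟩ h1 h2
    exact h1.2.1 h2.2.1
  have := Set.ncard_union_eq hdisj (hNBfin.subset (by rw [← hunion]; exact Set.subset_union_left))
    (hNBfin.subset (by rw [← hunion]; exact Set.subset_union_right))
  rw [hunion, hcard] at this
  rw [eBoundary, ← this]




lemma internal_le (hconn : T.Connected) (hac : T.IsAcyclic) (r : W)
    (X : Set (W × Bool)) (hX : X.Finite) :
    {p : (W × Bool) × (W × Bool) | p.1 ∈ X ∧ p.2 ∈ X ∧ (T.comap Prod.fst).Adj p.1 p.2}.ncard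
      ≤ 4 * X.ncard := by
  set E : Set ((W × Bool) × (W × Bool)) :=
    {p | p.1 ∈ X ∧ p.2 ∈ X ∧ (T.comap Prod.fst).Adj p.1 p.2} with hE
  have hEfin : E.Finite := (hX.prod hX).subset (fun p hp => ⟨hp.1, hp.2.1⟩)
  set A : Set ((W × Bool) × (W × Bool)) := {p ∈ E | T.dist r p.1.1 < T.dist r p.2.1} with hA
  set B : Set ((W × Bool) × (W × Bool)) := {p ∈ E | T.dist r p.2.1 < T.dist r p.1.1} with hB
  have hadj : ∀ p ∈ E, T.Adj p.1.1 p.2.1 := fun p hp => hp.2.2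
  have hEAB : E = A ∪ B := by
    ext p
    constructor
    · intro hp
      rcases lt_or_gt_of_ne (adj_dist_ne hconn hac (hadj p hp) (r := r)) with h | h
      · exact Or.inl ⟨hp, h⟩
      · exact Or.inr ⟨hp, h⟩
    · rintro (⟨hp, -⟩ | ⟨hp, -⟩) <;> exact hp
  have hdisj : Disjoint A B := by
    rw [Set.disjoint_left]
    rintro p ⟨-, h1⟩ ⟨-, h2⟩
    omega
  have hBA : B = Prod.swap '' A := by
    ext p
    constructor
    · rintro ⟨⟨h1, h2, h3⟩, h4⟩
      exact ⟨p.swap, ⟨⟨h2, h1, h3.symm⟩, h4⟩, Prod.swap_swap p⟩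
    · rintro ⟨q, ⟨⟨h1, h2, h3⟩, h4⟩, rfl⟩
      exact ⟨⟨h2, h1, h3.symm⟩, h4⟩
  have hcardBA : B.ncard = A.ncard := by
    rw [hBA, Set.ncard_image_of_injective _ Prod.swap_injective]
  have hA2 : A.ncard ≤ 2 * X.ncard := by
    set f : (W × Bool) × (W × Bool) → (W × Bool) × Bool := fun p => (p.2, p.1.2) with hf
    have hinj : Set.InjOn f A := by
      rintro p ⟨hpE, hpd⟩ q ⟨hqE, hqd⟩ hfeq
      simp only [hf, Prod.mk.injEq] at hfeq
      obtain ⟨h2, hb⟩ := hfeq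
      have h1 : p.1.1 = q.1.1 := by
        refine parent_unique hconn hac (hadj p hpE) ?_ hpd (h2 ▸ hqd)
        exact h2 ▸ hadj q hqE
      have : p.1 = q.1 := Prod.ext h1 hb
      exact Prod.ext this h2
    have himg : f '' A ⊆ X ×ˢ (Set.univ : Set Bool) := by
      rintro x ⟨p, ⟨hpE, -⟩, rfl⟩
      exact ⟨hpE.2.1, trivial⟩
    calc A.ncard = (f '' A).ncard := (Set.ncard_image_of_injOn hinj).symm
      _ ≤ (X ×ˢ (Set.univ : Set Bool)).ncard :=
          Set.ncard_le_ncard himg (hX.prod (Set.finite_univ))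
      _ = 2 * X.ncard := ncard_prod_univ_bool X
  have hAfin : A.Finite := hEfin.subset (fun p hp => hp.1)
  have hBfin : B.Finite := hEfin.subset (fun p hp => hp.1)
  calc E.ncard = (A ∪ B).ncard := by rw [hEAB]
    _ = A.ncard + B.ncard := Set.ncard_union_eq hdisj hAfin hBfin
    _ ≤ 4 * X.ncard := by omega


lemma support_set_ncard {r v : W} (p : T.Walk r v) (hp : p.IsPath) :
    {w | w ∈ p.support}.ncard = p.length + 1 := by
  classical
  have h1 : {w | w ∈ p.support} = ↑p.support.toFinset := by
    ext w; simp
  rw [h1, Set.ncard_coe_finset, List.toFinset_card_of_nodup hp.support_nodup,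
    SimpleGraph.Walk.length_support]

lemma path_internal_ge {r v : W} (p : T.Walk r v) (hp : p.IsPath)
    (X : Set (W × Bool)) (hXeq : X = {w | w ∈ p.support} ×ˢ (Set.univ : Set Bool)) :
    8 * p.length ≤ {q : (W × Bool) × (W × Bool) |
      q.1 ∈ X ∧ q.2 ∈ X ∧ (T.comap Prod.fst).Adj q.1 q.2}.ncard := by
  classical
  subst hXeq
  set X : Set (W × Bool) := {w | w ∈ p.support} ×ˢ (Set.univ : Set Bool) with hX
  set E : Set ((W × Bool) × (W × Bool)) :=
    {q | q.1 ∈ X ∧ q.2 ∈ X ∧ (T.comap Prod.fst).Adj q.1 q.2} with hE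
  have hXfin : X.Finite := (p.support.finite_toSet).prod Set.finite_univ
  have hEfin : E.Finite := (hXfin.prod hXfin).subset (fun q hq => ⟨hq.1, hq.2.1⟩)
  set g : Fin p.length × Bool × Bool × Bool → (W × Bool) × (W × Bool) :=
    fun a => if a.2.2.2 then ((p.getVert a.1, a.2.1), (p.getVert (a.1 + 1), a.2.2.1))
      else ((p.getVert (a.1 + 1), a.2.1), (p.getVert a.1, a.2.2.1)) with hg
  have hrange : Set.range g ⊆ E := by
    rintro q ⟨⟨i, b1, b2, d⟩, rfl⟩
    have h1 : p.getVert (i : ℕ) ∈ p.support := getVert_mem_support p i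
    have h2 : p.getVert ((i : ℕ) + 1) ∈ p.support := getVert_mem_support p _
    have hadj : T.Adj (p.getVert (i : ℕ)) (p.getVert ((i : ℕ) + 1)) :=
      p.adj_getVert_succ i.isLt
    cases d with
    | true =>
      simp only [hg, if_true, hE, Set.mem_setOf_eq]
      exact ⟨⟨h1, trivial⟩, ⟨h2, trivial⟩, hadj⟩
    | false =>
      simp only [hg, Bool.false_eq_true, if_false, hE, Set.mem_setOf_eq]
      exact ⟨⟨h2, trivial⟩, ⟨h1, trivial⟩, hadj.symm⟩
  have hginj : Function.Injective g := by
    rintro ⟨i, b1, b2, d⟩ ⟨j, c1, c2, e⟩ h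
    have hi : (i : ℕ) ≤ p.length := le_of_lt i.isLt
    have hj : (j : ℕ) ≤ p.length := le_of_lt j.isLt
    have hi1 : (i : ℕ) + 1 ≤ p.length := i.isLt
    have hj1 : (j : ℕ) + 1 ≤ p.length := j.isLt
    cases d <;> cases e <;>
        simp only [hg, if_true, if_false, Bool.false_eq_true, Prod.mk.injEq] at h
    · obtain ⟨⟨ha, hb1⟩, hc, hb2⟩ := h
      have := IsPath.getVert_inj hp hi1 hj1 ha
      simp only [Prod.mk.injEq]
      exact ⟨Fin.ext (by omega), hb1, hb2, trivial⟩
    · obtain ⟨⟨ha, -⟩, hc, -⟩ := h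
      have h1 := IsPath.getVert_inj hp hi1 hj ha
      have h2 := IsPath.getVert_inj hp hi hj1 hc
      omega
    · obtain ⟨⟨ha, -⟩, hc, -⟩ := h
      have h1 := IsPath.getVert_inj hp hi hj1 ha
      have h2 := IsPath.getVert_inj hp hi1 hj hc
      omega
    · obtain ⟨⟨ha, hb1⟩, hc, hb2⟩ := h
      have := IsPath.getVert_inj hp hi hj ha
      simp only [Prod.mk.injEq]
      exact ⟨Fin.ext (by omega), hb1, hb2, trivial⟩
  have hcard : (Set.range g).ncard = 8 * p.length := by
    rw [← Set.image_univ, Set.ncard_image_of_injective _ hginj, Set.ncard_univ]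
    simp only [Nat.card_eq_fintype_card, Fintype.card_prod, Fintype.card_fin,
      Fintype.card_bool]
    ring
  calc 8 * p.length = (Set.range g).ncard := hcard.symm
    _ ≤ E.ncard := Set.ncard_le_ncard hrange hEfin

end Stmt14Aux

/-- blowing up every vertex of an infinite `k`-regular tree `T` into an
independent pair, replacing each edge by a `K₂,₂` (with `d = 2k`), yields a `d`-regular
graph whose edge Cheeger constant is exactly `d − 4`. -/
theorem stmt14 {W : Type*} (T : SimpleGraph W) (k : ℕ) (hk : 1 ≤ k)
    (hinf : Infinite W) (hconn : T.Connected) (hac : T.IsAcyclic)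
    (hreg : ∀ v : W, (T.neighborSet v).ncard = k) :
    (∀ x : W × Bool,
        ((SimpleGraph.comap Prod.fst T).neighborSet x).ncard = 2 * k) ∧
    (∀ X : Set (W × Bool), X.Finite → X.Nonempty →
        ((2 * k : ℚ) - 4) * X.ncard ≤ eBoundary (SimpleGraph.comap Prod.fst T) X) ∧
    (∀ ε : ℚ, 0 < ε → ∃ X : Set (W × Bool), X.Finite ∧ X.Nonempty ∧
        (eBoundary (SimpleGraph.comap Prod.fst T) X : ℚ) <
          ((2 * k : ℚ) - 4 + ε) * X.ncard) := by
  classical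
  haveI := hinf
  have hTfin : ∀ v, (T.neighborSet v).Finite := by
    intro v
    by_contra h
    have h0 := Set.Infinite.ncard h
    rw [hreg v] at h0
    omega
  have hnb : ∀ x : W × Bool, (SimpleGraph.comap Prod.fst T).neighborSet x
      = (T.neighborSet x.1) ×ˢ (Set.univ : Set Bool) := by
    intro x
    ext q
    simp only [SimpleGraph.mem_neighborSet, SimpleGraph.comap_adj, Set.mem_prod,
      Set.mem_univ, and_true]
  have hGdeg : ∀ x : W × Bool, ((SimpleGraph.comap Prod.fst T).neighborSet x).ncard = 2 * k := by
    intro x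
    rw [hnb, ncard_prod_univ_bool, hreg]
  have hGfin : ∀ x : W × Bool, ((SimpleGraph.comap Prod.fst T).neighborSet x).Finite := by
    intro x
    rw [hnb]
    exact (hTfin x.1).prod Set.finite_univ
  obtain ⟨r⟩ : Nonempty W := inferInstance
  refine ⟨hGdeg, ?_, ?_⟩
  · intro X hXf hXne
    have hkey := key_count (SimpleGraph.comap Prod.fst T) X hXf (2 * k) hGfin hGdeg
    have hle := internal_le hconn hac r X hXf
    set m : ℕ := {p : (W × Bool) × (W × Bool) |
      p.1 ∈ X ∧ p.2 ∈ X ∧ (SimpleGraph.comap Prod.fst T).Adj p.1 p.2}.ncard with hm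
    have hkeyQ : (eBoundary (SimpleGraph.comap Prod.fst T) X : ℚ) + m = 2 * k * X.ncard := by
      exact_mod_cast congrArg (fun t : ℕ => (t : ℚ)) hkey
    have hleQ : (m : ℚ) ≤ 4 * X.ncard := by exact_mod_cast hle
    linarith
  · intro ε hε
    obtain ⟨n, hn⟩ := exists_nat_gt (4 / ε)
    obtain ⟨v, hv⟩ := treeExistsDistEq hconn hTfin hinf r n
    obtain ⟨p, hp, hplen⟩ := hconn.exists_path_of_dist r v
    rw [hv] at hplen
    set X : Set (W × Bool) := {w | w ∈ p.support} ×ˢ (Set.univ : Set Bool) with hXdef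
    have hXfin : X.Finite := (p.support.finite_toSet).prod Set.finite_univ
    have hXne : X.Nonempty := ⟨(r, true), p.start_mem_support, trivial⟩
    have hXcard : X.ncard = 2 * (n + 1) := by
      rw [hXdef, ncard_prod_univ_bool, support_set_ncard p hp, hplen]
    have hkey := key_count (SimpleGraph.comap Prod.fst T) X hXfin (2 * k) hGfin hGdeg
    have hge := path_internal_ge p hp X hXdef
    rw [hplen] at hge
    refine ⟨X, hXfin, hXne, ?_⟩
    set m : ℕ := {q : (W × Bool) × (W × Bool) |
      q.1 ∈ X ∧ q.2 ∈ X ∧ (SimpleGraph.comap Prod.fst T).Adj q.1 q.2}.ncard with hm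
    rw [hXcard] at hkey
    have hkeyQ : (eBoundary (SimpleGraph.comap Prod.fst T) X : ℚ) + m
        = 2 * k * (2 * (n + 1)) := by exact_mod_cast congrArg (fun t : ℕ => (t : ℚ)) hkey
    have hgeQ : (8 * n : ℚ) ≤ m := by exact_mod_cast hge
    have hεn : (4 : ℚ) < n * ε := (div_lt_iff₀ hε).mp hn
    have hXQ : (X.ncard : ℚ) = 2 * (n + 1) := by rw [hXcard]; push_cast; ring
    rw [hXQ]
    nlinarith [hkeyQ, hgeQ, hεn, hε]
end
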